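/- arXiv:2210.02606 — 8 statements merged into one kernel-verified Lean document; each statement's English description precedes it below -/
import Mathlib

section
/- Let f : ℝ^d → ℝ be defined by f(x) = max_{j ∈ J} (a_j + ⟨v_j, x⟩) for a finite family of affine functions with inf f ≤ 0. Then f has a global error bound: there exists τ > 0 such that τ · dist(x, S(f)) ≤ max{f(x), 0} for all x ∈ ℝ^d, where S(f) = {x | f(x) ≤ 0}. -/
open scoped RealInnerProductSpace
open Finset
set_option linter.unusedSectionVars false

section Aux

variable {κ : Type*} [Fintype κ] {E : Type*} [NormedAddCommGroup E]
  [InnerProductSpace ℝ E] [FiniteDimensional ℝ E]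

/-- Continuity of a finite sup'. -/
lemma continuous_finset_sup' {s : Finset κ} (hs : s.Nonempty) (f : κ → E → ℝ)
    (hf : ∀ i ∈ s, Continuous (f i)) :
    Continuous (fun x => s.sup' hs (fun i => f i x)) := by
  rw [continuous_iff_continuousAt]
  intro x
  exact Filter.Tendsto.finset_sup'_nhds_apply hs (fun i hi => (hf i hi).continuousAt)

/-- Conic Carathéodory: any nonnegative combination over `I` is a nonnegative
combination over a linearly independent subset. -/
lemma cone_caratheodory (v : κ → E) (I : Finset κ) :
    ∀ (μ : κ → ℝ), (∀ j, 0 ≤ μ j) →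
    ∃ T ⊆ I, LinearIndependent ℝ (fun j : T => v j) ∧
      ∃ ν : κ → ℝ, (∀ j, 0 ≤ ν j) ∧ ∑ j ∈ T, ν j • v j = ∑ j ∈ I, μ j • v j := by
  classical
  induction I using Finset.strongInduction with
  | _ I ih =>
    intro μ hμ
    by_cases hli : LinearIndependent ℝ (fun j : I => v j)
    · exact ⟨I, le_refl _, hli, μ, hμ, rfl⟩
    · rw [Fintype.not_linearIndependent_iff] at hli
      obtain ⟨g, hg0, i0, hi0⟩ := hli
      set c : κ → ℝ := fun j => if h : j ∈ I then g ⟨j, h⟩ else 0 with hc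
      have hcsum : ∑ j ∈ I, c j • v j = 0 := by
        rw [← Finset.sum_attach I (fun j => c j • v j)]
        simpa [hc] using hg0
      have key : ∀ c' : κ → ℝ, (∑ j ∈ I, c' j • v j = 0) → (∃ j ∈ I, 0 < c' j) →
          ∃ T ⊆ I, LinearIndependent ℝ (fun j : T => v j) ∧
            ∃ ν : κ → ℝ, (∀ j, 0 ≤ ν j) ∧ ∑ j ∈ T, ν j • v j = ∑ j ∈ I, μ j • v j := by
        intro c' hc'sum ⟨jp, hjpI, hjp⟩
        set P := I.filter (fun j => 0 < c' j) with hP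
        have hPne : P.Nonempty := ⟨jp, by simp [hP, hjpI, hjp]⟩
        set r := P.inf' hPne (fun j => μ j / c' j) with hr
        obtain ⟨j0, hj0P, hj0r⟩ := Finset.exists_mem_eq_inf' hPne (fun j => μ j / c' j)
        have hj0I : j0 ∈ I := (Finset.mem_filter.1 hj0P).1
        have hcj0 : 0 < c' j0 := (Finset.mem_filter.1 hj0P).2
        have hrnn : 0 ≤ r := by
          apply Finset.le_inf'
          intro b hb
          exact div_nonneg (hμ b) (le_of_lt (Finset.mem_filter.1 hb).2)
        set μ' : κ → ℝ := fun j => if j ∈ I.erase j0 then μ j - r * c' j else 0 with hμ'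
        have hμ'nn : ∀ j, 0 ≤ μ' j := by
          intro j
          simp only [hμ']
          split
          · rename_i hj
            have hjI : j ∈ I := Finset.mem_of_mem_erase hj
            rcases le_or_gt (c' j) 0 with hcj | hcj
            · nlinarith [hμ j, mul_nonneg hrnn (neg_nonneg.2 hcj)]
            · have : r ≤ μ j / c' j := Finset.inf'_le _ (Finset.mem_filter.2 ⟨hjI, hcj⟩)
              rw [le_div_iff₀ hcj] at this
              linarith
          · exact le_refl 0
        have hμ'j0 : μ j0 - r * c' j0 = 0 := by
          have hreq : r = μ j0 / c' j0 := by rw [hr, hj0r]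
          rw [hreq, div_mul_cancel₀ _ (ne_of_gt hcj0), sub_self]
        have hsum' : ∑ j ∈ I.erase j0, μ' j • v j = ∑ j ∈ I, μ j • v j := by
          have h1 : ∑ j ∈ I.erase j0, μ' j • v j
              = ∑ j ∈ I.erase j0, (μ j - r * c' j) • v j := by
            apply Finset.sum_congr rfl
            intro j hj
            simp only [hμ', if_pos hj]
          have h2 : ∑ j ∈ I, (μ j - r * c' j) • v j
              = (μ j0 - r * c' j0) • v j0 + ∑ j ∈ I.erase j0, (μ j - r * c' j) • v j :=
            (Finset.add_sum_erase _ _ hj0I).symm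
          have h3 : ∑ j ∈ I, (μ j - r * c' j) • v j
              = ∑ j ∈ I, μ j • v j - r • ∑ j ∈ I, c' j • v j := by
            rw [Finset.smul_sum, ← Finset.sum_sub_distrib]
            apply Finset.sum_congr rfl
            intro j _
            rw [sub_smul, smul_smul]
          rw [h1]
          rw [hμ'j0, zero_smul, zero_add] at h2
          rw [← h2, h3, hc'sum, smul_zero, sub_zero]
        obtain ⟨T, hTsub, hTli, ν, hνnn, hνsum⟩ :=
          ih (I.erase j0) (Finset.erase_ssubset hj0I) μ' hμ'nn
        exact ⟨T, hTsub.trans (Finset.erase_subset _ _), hTli, ν, hνnn, by rw [hνsum, hsum']⟩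
      rcases lt_or_gt_of_ne hi0 with h | h
      · refine key (fun j => -c j) ?_ ⟨i0, i0.2, ?_⟩
        · simp only [neg_smul, Finset.sum_neg_distrib, hcsum, neg_zero]
        · simp only [hc, dif_pos i0.2]
          simpa using h
      · exact key c hcsum ⟨i0, i0.2, by simp [hc, i0.2, h]⟩

end Aux
section Aux2

variable {κ : Type*} [Fintype κ] {E : Type*} [NormedAddCommGroup E]
  [InnerProductSpace ℝ E] [FiniteDimensional ℝ E]

/-- The cone generated by a linearly independent finite family is closed. -/
lemma isClosed_cone_of_linearIndependent (v : κ → E) (T : Finset κ)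
    (hli : LinearIndependent ℝ (fun j : T => v j)) :
    IsClosed {x : E | ∃ ν : κ → ℝ, (∀ j, 0 ≤ ν j) ∧ ∑ j ∈ T, ν j • v j = x} := by
  classical
  set L : (T → ℝ) →ₗ[ℝ] E :=
    { toFun := fun g => ∑ j : T, g j • v j
      map_add' := by
        intro g h
        rw [← Finset.sum_add_distrib]
        exact Finset.sum_congr rfl fun j _ => add_smul _ _ _
      map_smul' := by
        intro c g
        rw [RingHom.id_apply, Finset.smul_sum]
        exact Finset.sum_congr rfl fun j _ => smul_smul c (g j) (v j) ▸ (smul_assoc c (g j) (v j)).symm } with hL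
  have hinj : LinearMap.ker L = ⊥ := by
    rw [LinearMap.ker_eq_bot']
    intro g hg
    rw [Fintype.linearIndependent_iff] at hli
    funext i
    exact hli g hg i
  have hemb := LinearMap.isClosedEmbedding_of_injective hinj
  have hQ : IsClosed {g : T → ℝ | ∀ j, 0 ≤ g j} := by
    have : {g : T → ℝ | ∀ j, 0 ≤ g j} = ⋂ j : T, {g : T → ℝ | 0 ≤ g j} := by
      ext g; simp [Set.mem_iInter]
    rw [this]
    exact isClosed_iInter fun j => isClosed_le continuous_const (continuous_apply j)
  have himg := hemb.isClosedMap _ hQ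
  convert himg using 1
  ext x
  constructor
  · rintro ⟨ν, hν, hsum⟩
    refine ⟨fun j : T => ν j, fun j => hν j, ?_⟩
    show ∑ j : T, ν j • v j = x
    rw [← hsum]
    exact Finset.sum_attach T (fun j => ν j • v j)
  · rintro ⟨g, hg, hsum⟩
    refine ⟨fun j => if h : j ∈ T then g ⟨j, h⟩ else 0, ?_, ?_⟩
    · intro j
      by_cases h : j ∈ T
      · simpa [h] using hg ⟨j, h⟩
      · simp [h]
    · rw [← hsum]
      show _ = ∑ j : T, g j • v j
      rw [← Finset.sum_attach T (fun j => (if h : j ∈ T then g ⟨j, h⟩ else 0) • v j)]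
      exact Finset.sum_congr rfl fun j _ => by simp [j.2]

/-- The cone generated by any finite family is closed. -/
lemma isClosed_cone (v : κ → E) (I : Finset κ) :
    IsClosed {x : E | ∃ μ : κ → ℝ, (∀ j, 0 ≤ μ j) ∧ ∑ j ∈ I, μ j • v j = x} := by
  classical
  have heq : {x : E | ∃ μ : κ → ℝ, (∀ j, 0 ≤ μ j) ∧ ∑ j ∈ I, μ j • v j = x}
      = ⋃ T ∈ {T : Finset κ | T ⊆ I ∧ LinearIndependent ℝ (fun j : T => v j)},
        {x : E | ∃ ν : κ → ℝ, (∀ j, 0 ≤ ν j) ∧ ∑ j ∈ T, ν j • v j = x} := by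
    ext x
    simp only [Set.mem_iUnion, Set.mem_setOf_eq, exists_prop]
    constructor
    · rintro ⟨μ, hμ, hsum⟩
      obtain ⟨T, hTsub, hTli, ν, hν, hνsum⟩ := cone_caratheodory v I μ hμ
      exact ⟨T, ⟨hTsub, hTli⟩, ν, hν, by rw [hνsum, hsum]⟩
    · rintro ⟨T, ⟨hTsub, _⟩, ν, hν, hsum⟩
      refine ⟨fun j => if j ∈ T then ν j else 0, fun j => by by_cases h : j ∈ T <;> simp [h, hν j], ?_⟩
      rw [← hsum]
      rw [← Finset.sum_subset hTsub (fun j _ hjT => by simp [hjT])]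
      exact Finset.sum_congr rfl fun j hj => by simp [hj]
  rw [heq]
  exact (Set.toFinite _).isClosed_biUnion
    (fun T hT => isClosed_cone_of_linearIndependent v T hT.2)

end Aux2
section Aux3

variable {κ : Type*} [Fintype κ] {E : Type*} [NormedAddCommGroup E]
  [InnerProductSpace ℝ E] [FiniteDimensional ℝ E]

open scoped RealInnerProductSpace

/-- On the cone generated by `v j, j ∈ I`, the max of `⟪v j, ·⟫` dominates a
positive multiple of the norm. -/
lemma cone_pos_const (v : κ → E) (I : Finset κ) :
    ∃ τ > (0 : ℝ), ∀ w : E, ∀ μ : κ → ℝ, (∀ j, 0 ≤ μ j) → ∑ j ∈ I, μ j • v j = w →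
      w = 0 ∨ ∃ j ∈ I, τ * ‖w‖ ≤ ⟪v j, w⟫ := by
  classical
  set C := {x : E | ∃ μ : κ → ℝ, (∀ j, 0 ≤ μ j) ∧ ∑ j ∈ I, μ j • v j = x} with hC
  have hCclosed : IsClosed C := isClosed_cone v I
  set K := C ∩ Metric.sphere (0 : E) 1 with hK
  have hKcompact : IsCompact K := (isCompact_sphere 0 1).inter_left hCclosed
  -- membership of normalized vectors
  have hmemK : ∀ w : E, w ≠ 0 → ∀ μ : κ → ℝ, (∀ j, 0 ≤ μ j) → ∑ j ∈ I, μ j • v j = w →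
      (‖w‖⁻¹ • w) ∈ K := by
    intro w hw μ hμ hsum
    constructor
    · refine ⟨fun j => ‖w‖⁻¹ * μ j, fun j => mul_nonneg (by positivity) (hμ j), ?_⟩
      have heq : ∑ j ∈ I, (‖w‖⁻¹ * μ j) • v j = ‖w‖⁻¹ • ∑ j ∈ I, μ j • v j := by
        rw [Finset.smul_sum]
        exact Finset.sum_congr rfl fun j _ => mul_smul _ _ _
      rw [heq, hsum]
    · simp [norm_smul, norm_ne_zero_iff.2 hw, inv_mul_cancel₀ (norm_ne_zero_iff.2 hw).elim]
  by_cases hKne : K.Nonempty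
  · -- I is nonempty
    obtain ⟨u0, ⟨μ0, hμ0, hsum0⟩, hu0⟩ := hKne
    have hIne : I.Nonempty := by
      rcases Finset.eq_empty_or_nonempty I with h | h
      · exfalso
        rw [h, Finset.sum_empty] at hsum0
        rw [mem_sphere_zero_iff_norm] at hu0
        rw [← hsum0] at hu0
        simp at hu0
      · exact h
    set g : E → ℝ := fun w => I.sup' hIne (fun j => ⟪v j, w⟫) with hg
    have hgcont : Continuous g :=
      continuous_finset_sup' hIne _ (fun j _ => (innerSL ℝ (v j)).continuous)
    obtain ⟨w0, hw0K, hw0min⟩ := hKcompact.exists_isMinOn ⟨u0, ⟨⟨μ0, hμ0, hsum0⟩, hu0⟩⟩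
      hgcont.continuousOn
    set τ := g w0 with hτ
    have hτpos : 0 < τ := by
      obtain ⟨⟨ν0, hν0, hνsum⟩, hw0s⟩ := hw0K
      have hnorm : ⟪w0, w0⟫ = 1 := by
        rw [real_inner_self_eq_norm_sq, mem_sphere_zero_iff_norm.1 hw0s]; norm_num
      have hsum1 : ∑ j ∈ I, ν0 j * ⟪v j, w0⟫ = 1 := by
        have h' : ⟪∑ j ∈ I, ν0 j • v j, w0⟫ = (1:ℝ) := by rw [hνsum, hnorm]
        rw [← h', sum_inner]
        exact Finset.sum_congr rfl fun j _ => (real_inner_smul_left _ _ _).symm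
      have : ∃ j ∈ I, 0 < ν0 j * ⟪v j, w0⟫ := by
        by_contra h
        push_neg at h
        have := Finset.sum_nonpos h
        rw [hsum1] at this
        linarith
      obtain ⟨j, hjI, hj⟩ := this
      have hvw : 0 < ⟪v j, w0⟫ := by
        rcases le_or_gt ⟪v j, w0⟫ 0 with h | h
        · nlinarith [hν0 j]
        · exact h
      calc (0:ℝ) < ⟪v j, w0⟫ := hvw
        _ ≤ τ := Finset.le_sup' (fun j => ⟪v j, w0⟫) hjI
    refine ⟨τ, hτpos, fun w μ hμ hsum => ?_⟩
    by_cases hw : w = 0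
    · exact Or.inl hw
    · right
      have huK := hmemK w hw μ hμ hsum
      have hgu : τ ≤ g (‖w‖⁻¹ • w) := hw0min huK
      obtain ⟨j, hjI, hj⟩ := Finset.exists_mem_eq_sup' hIne (fun j => ⟪v j, ‖w‖⁻¹ • w⟫)
      refine ⟨j, hjI, ?_⟩
      have hwpos : 0 < ‖w‖ := norm_pos_iff.2 hw
      have h1 : τ ≤ ⟪v j, ‖w‖⁻¹ • w⟫ := by rw [← hj]; exact hgu
      rw [real_inner_smul_right] at h1
      rw [mul_comm]
      calc ‖w‖ * τ ≤ ‖w‖ * (‖w‖⁻¹ * ⟪v j, w⟫) := by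
            exact mul_le_mul_of_nonneg_left h1 hwpos.le
        _ = ⟪v j, w⟫ := by field_simp
  · refine ⟨1, one_pos, fun w μ hμ hsum => ?_⟩
    by_cases hw : w = 0
    · exact Or.inl hw
    · exact absurd ⟨_, hmemK w hw μ hμ hsum⟩ hKne

end Aux3
theorem stmt_5 {d : ℕ} {κ : Type*} [Fintype κ] [Nonempty κ]
    (a : κ → ℝ) (v : κ → EuclideanSpace ℝ (Fin d))
    (f : EuclideanSpace ℝ (Fin d) → ℝ)
    (hf : ∀ x, f x = Finset.univ.sup' Finset.univ_nonempty (fun j => a j + ⟪v j, x⟫))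
    (hinf : (⨅ x, f x) ≤ 0) :
    ∃ τ > (0 : ℝ), ∀ x, τ * Metric.infDist x {y | f y ≤ 0} ≤ max (f x) 0 := by
  classical
  set S := {y : EuclideanSpace ℝ (Fin d) | f y ≤ 0} with hS
  have hfc : Continuous f := by
    have hfe : f = fun x => Finset.univ.sup' Finset.univ_nonempty (fun j => a j + ⟪v j, x⟫) :=
      funext hf
    rw [hfe]
    exact continuous_finset_sup' _ _
      (fun j _ => continuous_const.add (innerSL ℝ (v j)).continuous)
  have hSclosed : IsClosed S := IsClosed.preimage hfc isClosed_Iic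
  have hmemS : ∀ y, y ∈ S ↔ ∀ j, a j + ⟪v j, y⟫ ≤ 0 := fun y => by
    simp [hS, hf y, Finset.sup'_le_iff]
  have hSconv : Convex ℝ S := by
    intro y hy z hz s t hs ht hst
    rw [hmemS] at hy hz ⊢
    intro j
    have hin : ⟪v j, s • y + t • z⟫ = s * ⟪v j, y⟫ + t * ⟪v j, z⟫ := by
      rw [inner_add_right, real_inner_smul_right, real_inner_smul_right]
    have h1 := mul_le_mul_of_nonneg_left (hy j) hs
    have h2 := mul_le_mul_of_nonneg_left (hz j) ht
    have ha : a j = s * a j + t * a j := by rw [← add_mul, hst, one_mul]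
    rw [hin]
    nlinarith
  choose τc hτcpos hτcspec using fun I : Finset κ => cone_pos_const v I
  set τ := (Finset.univ : Finset (Finset κ)).inf' ⟨∅, Finset.mem_univ _⟩ τc with hτ
  refine ⟨τ, ?_, ?_⟩
  · show (0:ℝ) < _
    rw [hτ]
    exact (Finset.lt_inf'_iff _).2 fun I _ => hτcpos I
  intro x
  by_cases hxS : x ∈ S
  · rw [Metric.infDist_zero_of_mem hxS, mul_zero]
    exact le_max_right _ _
  rcases Set.eq_empty_or_nonempty S with hSe | hSne
  · rw [hSe, Metric.infDist_empty, mul_zero]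
    exact le_max_right _ _
  have hfx : 0 < f x := by
    by_contra h
    exact hxS (by rw [hS]; exact Set.mem_setOf_eq ▸ (not_lt.1 h))
  obtain ⟨xs, hxsS, hxs⟩ :=
    exists_norm_eq_iInf_of_complete_convex hSne hSclosed.isComplete hSconv x
  have hproj := (norm_eq_iInf_iff_real_inner_le_zero hSconv hxsS).1 hxs
  have hdist : Metric.infDist x S = ‖x - xs‖ := by
    rw [Metric.infDist_eq_iInf]
    simp only [dist_eq_norm]
    exact hxs.symm
  set w := x - xs with hw
  set I := Finset.univ.filter (fun j => a j + ⟪v j, xs⟫ = 0) with hI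
  have hxsle : ∀ j, a j + ⟪v j, xs⟫ ≤ 0 := (hmemS xs).1 hxsS
  have hwC : ∃ μ : κ → ℝ, (∀ j, 0 ≤ μ j) ∧ ∑ j ∈ I, μ j • v j = w := by
    by_contra hnC
    set K : ConvexCone ℝ (EuclideanSpace ℝ (Fin d)) :=
      { carrier := {z | ∃ μ : κ → ℝ, (∀ j, 0 ≤ μ j) ∧ ∑ j ∈ I, μ j • v j = z}
        smul_mem' := by
          rintro c hc z ⟨μ, hμ, hsum⟩
          refine ⟨fun j => c * μ j, fun j => mul_nonneg hc.le (hμ j), ?_⟩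
          have heq : ∑ j ∈ I, (c * μ j) • v j = c • ∑ j ∈ I, μ j • v j := by
            rw [Finset.smul_sum]
            exact Finset.sum_congr rfl fun j _ => mul_smul _ _ _
          rw [heq, hsum]
        add_mem' := by
          rintro z1 ⟨μ1, hμ1, hsum1⟩ z2 ⟨μ2, hμ2, hsum2⟩
          refine ⟨fun j => μ1 j + μ2 j, fun j => add_nonneg (hμ1 j) (hμ2 j), ?_⟩
          rw [← hsum1, ← hsum2, ← Finset.sum_add_distrib]
          exact Finset.sum_congr rfl fun j _ => add_smul _ _ _ } with hK
    have hKne : (K : Set (EuclideanSpace ℝ (Fin d))).Nonempty :=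
      ⟨0, ⟨fun _ => 0, fun _ => le_refl 0, by simp⟩⟩
    have hKcl : IsClosed (K : Set (EuclideanSpace ℝ (Fin d))) := isClosed_cone v I
    have hwK : w ∉ K := hnC
    obtain ⟨y, hy1, hy2⟩ : ∃ y, (∀ z ∈ (K : Set (EuclideanSpace ℝ (Fin d))), 0 ≤ ⟪z, y⟫) ∧ ⟪y, w⟫ < 0 := by
      let P : ProperCone ℝ (EuclideanSpace ℝ (Fin d)) :=
        { carrier := (K : Set (EuclideanSpace ℝ (Fin d)))
          add_mem' := fun ha hb => K.add_mem ha hb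
          zero_mem' := ⟨fun _ => 0, fun _ => le_refl 0, by simp⟩
          smul_mem' := by
            rintro c z ⟨μ, hμ, hsum⟩
            refine ⟨fun j => (c : ℝ) * μ j, fun j => mul_nonneg c.2 (hμ j), ?_⟩
            show _ = (c : ℝ) • z
            rw [← hsum, Finset.smul_sum]
            exact Finset.sum_congr rfl fun j _ => mul_smul _ _ _
          isClosed' := hKcl }
      obtain ⟨y, hy1, hy2⟩ := ProperCone.hyperplane_separation' P (x₀ := w) hwK
      exact ⟨y, hy1, by rwa [real_inner_comm]⟩
    have hvK : ∀ j ∈ I, 0 ≤ ⟪v j, y⟫ := by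
      intro j hj
      apply hy1
      refine ⟨fun i => if i = j then 1 else 0, fun i => by positivity, ?_⟩
      have heq : ∀ i ∈ I, (if i = j then (1:ℝ) else 0) • v i = if i = j then v i else 0 :=
        fun i _ => by split <;> simp
      rw [Finset.sum_congr rfl heq, Finset.sum_ite_eq' I j (fun i => v i), if_pos hj]
    set t := Finset.univ.inf' Finset.univ_nonempty
      (fun j => if a j + ⟪v j, xs⟫ < 0 ∧ ⟪v j, y⟫ < 0
        then (a j + ⟪v j, xs⟫) / ⟪v j, y⟫ else 1) with htd
    have htpos : 0 < t := by
      rw [htd, Finset.lt_inf'_iff]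
      intro j _
      split
      · rename_i h
        exact div_pos_of_neg_of_neg h.1 h.2
      · exact one_pos
    have hy'S : xs - t • y ∈ S := by
      rw [hmemS]
      intro j
      have hin : ⟪v j, xs - t • y⟫ = ⟪v j, xs⟫ - t * ⟪v j, y⟫ := by
        rw [inner_sub_right, real_inner_smul_right]
      rw [hin]
      by_cases h : a j + ⟪v j, xs⟫ < 0 ∧ ⟪v j, y⟫ < 0
      · have hle : t ≤ (a j + ⟪v j, xs⟫) / ⟪v j, y⟫ := by
          have := Finset.inf'_le (b := j)
            (fun j => if a j + ⟪v j, xs⟫ < 0 ∧ ⟪v j, y⟫ < 0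
              then (a j + ⟪v j, xs⟫) / ⟪v j, y⟫ else 1) (Finset.mem_univ j)
          rwa [if_pos h] at this
        rw [le_div_iff_of_neg h.2] at hle
        linarith
      · rcases eq_or_lt_of_le (hxsle j) with heq | hlt
        
        · have hjI : j ∈ I := by
            rw [hI, Finset.mem_filter]
            exact ⟨Finset.mem_univ j, heq⟩
          have := hvK j hjI
          nlinarith
        · have hynn : 0 ≤ ⟪v j, y⟫ := by
            by_contra hyn
            exact h ⟨hlt, not_le.1 hyn⟩
          nlinarith
    have hple := hproj _ hy'S
    have : ⟪x - xs, xs - t • y - xs⟫ = -(t * ⟪w, y⟫) := by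
      rw [sub_sub_cancel_left, inner_neg_right, real_inner_smul_right]
    rw [this] at hple
    have hwy : 0 ≤ ⟪w, y⟫ := by nlinarith
    rw [real_inner_comm] at hwy
    linarith
  obtain ⟨μ, hμ, hsum⟩ := hwC
  have hwne : w ≠ 0 := sub_ne_zero.2 (fun h => hxS (h ▸ hxsS))
  rcases hτcspec I w μ hμ hsum with h0 | ⟨j, hjI, hjle⟩
  · exact absurd h0 hwne
  have hjact : a j + ⟪v j, xs⟫ = 0 := (Finset.mem_filter.1 hjI).2
  have h1 : ⟪v j, w⟫ = a j + ⟪v j, x⟫ := by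
    rw [hw, inner_sub_right]
    linarith
  have h2 : a j + ⟪v j, x⟫ ≤ f x := by
    rw [hf x]
    exact Finset.le_sup' (fun j => a j + ⟪v j, x⟫) (Finset.mem_univ j)
  have hτle : τ ≤ τc I := Finset.inf'_le _ (Finset.mem_univ I)
  rw [hdist, max_eq_left hfx.le]
  calc τ * ‖w‖ ≤ τc I * ‖w‖ := mul_le_mul_of_nonneg_right hτle (norm_nonneg w)
    _ ≤ ⟪v j, w⟫ := hjle
    _ = a j + ⟪v j, x⟫ := h1
    _ ≤ f x := h2
end

section
/- Let f(x) = min_{i ∈ I} f_i(x) where each f_i(x) = max_{j ∈ J(i)} (a_{ij} + ⟨v_{ij}, x⟩) is a convex piecewise affine function, and suppose inf f_i ≤ 0 for every i ∈ I. Then f has a global error bound: there exists τ > 0 such that τ · dist(x, S(f)) ≤ max{f(x), 0} for all x ∈ ℝ^d. -/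
open Finset Metric
open scoped RealInnerProductSpace

section Aux

lemma conic_cara_aux {E : Type*} [AddCommGroup E] [Module ℝ E] {J : Type*} [DecidableEq J]
    (v : J → E) : ∀ (n : ℕ) (s : Finset J), s.card ≤ n → ∀ (lam : J → ℝ), (∀ j ∈ s, 0 ≤ lam j) →
    ∃ t, t ⊆ s ∧ LinearIndependent ℝ (fun j : t => v j) ∧ ∃ mu : J → ℝ,
      (∀ j ∈ t, 0 ≤ mu j) ∧ ∑ j ∈ t, mu j • v j = ∑ j ∈ s, lam j • v j := by
  intro n
  induction n with
  | zero =>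
    intro s hs lam _
    have : s = ∅ := Finset.card_eq_zero.mp (Nat.le_zero.mp hs)
    subst this
    exact ⟨∅, subset_rfl, linearIndependent_empty_type, 0, by simp, by simp⟩
  | succ n ih =>
    intro s hs lam hlam
    by_cases hind : LinearIndependent ℝ (fun j : s => v j)
    · exact ⟨s, subset_rfl, hind, lam, hlam, rfl⟩
    · obtain ⟨g, hgsum, i₀, hgi₀⟩ := Fintype.not_linearIndependent_iff.mp hind
      -- extend g to J
      set gg : J → ℝ := fun j => if h : j ∈ s then g ⟨j, h⟩ else 0 with hgg
      have hggsum : ∑ j ∈ s, gg j • v j = 0 := by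
        rw [← Finset.sum_coe_sort s (fun j => gg j • v j)]
        rw [← hgsum]
        apply Finset.sum_congr rfl
        intro i _
        simp [hgg, i.2]
      have hex : ∃ g' : J → ℝ, (∑ j ∈ s, g' j • v j = 0) ∧ ∃ j ∈ s, 0 < g' j := by
        by_cases hpos : ∃ j ∈ s, 0 < gg j
        · exact ⟨gg, hggsum, hpos⟩
        · refine ⟨-gg, by simpa using congrArg Neg.neg hggsum, i₀, i₀.2, ?_⟩
          push_neg at hpos
          have h1 : gg i₀ ≠ 0 := by simp [hgg, i₀.2, hgi₀]
          have h2 : gg i₀ ≤ 0 := hpos i₀ i₀.2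
          simp only [Pi.neg_apply]
          cases lt_or_eq_of_le h2 with
          | inl h => linarith
          | inr h => exact absurd h h1
      obtain ⟨c, hcsum, hcpos⟩ := hex
      set P := s.filter (fun j => 0 < c j) with hP
      have hPne : P.Nonempty := by
        obtain ⟨j, hj, hjpos⟩ := hcpos
        exact ⟨j, Finset.mem_filter.mpr ⟨hj, hjpos⟩⟩
      obtain ⟨j₀, hj₀P, hj₀min⟩ := Finset.exists_mem_eq_inf' hPne (fun j => lam j / c j)
      set r := P.inf' hPne (fun j => lam j / c j) with hr
      have hj₀s : j₀ ∈ s := (Finset.mem_filter.mp hj₀P).1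
      have hcj₀ : 0 < c j₀ := (Finset.mem_filter.mp hj₀P).2
      have hrnn : 0 ≤ r := by
        rw [hj₀min]
        exact div_nonneg (hlam j₀ hj₀s) hcj₀.le
      set lam' : J → ℝ := fun j => lam j - r * c j with hlam'
      have hlam'nn : ∀ j ∈ s, 0 ≤ lam' j := by
        intro j hj
        by_cases hcj : 0 < c j
        · have hle : r ≤ lam j / c j := Finset.inf'_le _ (Finset.mem_filter.mpr ⟨hj, hcj⟩)
          have h2 : r * c j ≤ lam j := (le_div_iff₀ hcj).mp hle
          simp only [hlam']
          linarith
        · push_neg at hcj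
          have : r * c j ≤ 0 := mul_nonpos_of_nonneg_of_nonpos hrnn hcj
          have := hlam j hj
          simp [hlam']; linarith
      have hlam'j₀ : lam' j₀ = 0 := by
        simp only [hlam']
        rw [hj₀min, div_mul_cancel₀ _ hcj₀.ne', sub_self]
      have hsum' : ∑ j ∈ s, lam' j • v j = ∑ j ∈ s, lam j • v j := by
        simp only [hlam', sub_smul, Finset.sum_sub_distrib, mul_smul]
        rw [← Finset.smul_sum, hcsum, smul_zero, sub_zero]
      have herase : ∑ j ∈ s.erase j₀, lam' j • v j = ∑ j ∈ s, lam j • v j := by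
        rw [← hsum', ← Finset.add_sum_erase s _ hj₀s, hlam'j₀, zero_smul, zero_add]
      have hcard : (s.erase j₀).card ≤ n := by
        have := Finset.card_erase_of_mem hj₀s
        omega
      obtain ⟨t, hts, hti, mu, hmu, hmusum⟩ := ih (s.erase j₀) hcard lam'
        (fun j hj => hlam'nn j (Finset.mem_of_mem_erase hj))
      exact ⟨t, hts.trans (Finset.erase_subset _ _), hti, mu, hmu, by rw [hmusum, herase]⟩

variable {E : Type*} [NormedAddCommGroup E] [InnerProductSpace ℝ E] [FiniteDimensional ℝ E]
  {J : Type*} [Fintype J] [DecidableEq J]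

noncomputable def combMap (v : J → E) (t : Finset J) : (t → ℝ) →ₗ[ℝ] E where
  toFun := fun lam => ∑ j : t, lam j • v j
  map_add' := by intro x y; simp [add_smul, Finset.sum_add_distrib]
  map_smul' := by intro c x; simp [Finset.smul_sum, mul_smul]

def Dset (v : J → E) (t : Finset J) : Set E :=
  (fun lam : t → ℝ => ∑ j : t, lam j • v j) '' {lam | ∀ j, 0 ≤ lam j}

omit [DecidableEq J] in
lemma closed_D (v : J → E) (t : Finset J) (ht : LinearIndependent ℝ (fun j : t => v j)) :
    IsClosed (Dset v t) := by
  have hker : LinearMap.ker (combMap v t) = ⊥ := by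
    rw [LinearMap.ker_eq_bot']
    intro g hg
    exact funext (Fintype.linearIndependent_iff.mp ht g hg)
  have hce := LinearMap.isClosedEmbedding_of_injective (f := combMap v t) hker
  have horth : IsClosed {lam : t → ℝ | ∀ j, 0 ≤ lam j} := by
    have : {lam : t → ℝ | ∀ j, 0 ≤ lam j} = ⋂ j, {lam | 0 ≤ lam j} := by
      ext; simp [Set.mem_iInter]
    rw [this]
    exact isClosed_iInter fun j => isClosed_le continuous_const (continuous_apply j)
  exact hce.isClosedMap _ horth

lemma closed_cone (v : J → E) (s : Finset J) :
    IsClosed {u : E | ∃ lam : J → ℝ, (∀ j ∈ s, 0 ≤ lam j) ∧ u = ∑ j ∈ s, lam j • v j} := by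
  have key : {u : E | ∃ lam : J → ℝ, (∀ j ∈ s, 0 ≤ lam j) ∧ u = ∑ j ∈ s, lam j • v j}
      = ⋃ t : {t : Finset J // t ⊆ s ∧ LinearIndependent ℝ (fun j : t => v j)},
        Dset v t.1 := by
    ext u
    constructor
    · rintro ⟨lam, hnn, rfl⟩
      obtain ⟨t, hts, hti, mu, hmu, hmusum⟩ :=
        conic_cara_aux v s.card s le_rfl lam hnn
      refine Set.mem_iUnion.mpr ⟨⟨t, hts, hti⟩, ?_⟩
      refine ⟨fun j => mu j.1, fun j => hmu j.1 j.2, ?_⟩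
      simp only
      rw [← hmusum]
      exact Finset.sum_coe_sort t (fun j => mu j • v j)
    · intro hu
      obtain ⟨⟨t, hts, _⟩, ⟨lam, hlam, hsum⟩⟩ := Set.mem_iUnion.mp hu
      refine ⟨fun j => if h : j ∈ t then lam ⟨j, h⟩ else 0, ?_, ?_⟩
      · intro j _
        by_cases h : j ∈ t
        · simpa [h] using hlam ⟨j, h⟩
        · simp [h]
      · rw [← hsum]
        rw [← Finset.sum_subset hts (by intro x _ hx; simp [hx])]
        rw [← Finset.sum_coe_sort t]
        apply Finset.sum_congr rfl
        intro j _
        simp [j.2]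
  rw [key]
  exact isClosed_iUnion_of_finite fun t => closed_D v t.1 t.2.2

lemma farkas (v : J → E) (s : Finset J) (u : E)
    (h : ∀ w : E, (∀ j ∈ s, ⟪v j, w⟫ ≤ 0) → ⟪u, w⟫ ≤ 0) :
    ∃ lam : J → ℝ, (∀ j ∈ s, 0 ≤ lam j) ∧ u = ∑ j ∈ s, lam j • v j := by
  by_contra hu
  set C : Set E := {u : E | ∃ lam : J → ℝ, (∀ j ∈ s, 0 ≤ lam j) ∧ u = ∑ j ∈ s, lam j • v j}
    with hC
  have hzero : (0 : E) ∈ C := ⟨0, by simp, by simp⟩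
  set K : ConvexCone ℝ E :=
    { carrier := C
      smul_mem' := by
        rintro c hc x ⟨lam, hnn, rfl⟩
        exact ⟨c • lam, fun j hj => mul_nonneg hc.le (hnn j hj),
          by rw [Finset.smul_sum]; simp [smul_smul]⟩
      add_mem' := by
        rintro x ⟨lam, hnn, rfl⟩ y ⟨mu, hmu, rfl⟩
        exact ⟨lam + mu, fun j hj => add_nonneg (hnn j hj) (hmu j hj),
          by simp [add_smul, Finset.sum_add_distrib]⟩ } with hK
  have hKC : (K : Set E) = C := rfl
  let P : ProperCone ℝ E :=
    { carrier := C
      zero_mem' := hzero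
      add_mem' := fun hx hy => K.add_mem hx hy
      smul_mem' := by
        rintro c x ⟨lam, hnn, rfl⟩
        exact ⟨(c : ℝ) • lam, fun j hj => mul_nonneg c.2 (hnn j hj),
          by rw [show c • ∑ j ∈ s, lam j • v j = (c : ℝ) • ∑ j ∈ s, lam j • v j from rfl,
            Finset.smul_sum]; simp [smul_smul]⟩
      isClosed' := closed_cone v s }
  obtain ⟨y, hy1', hy2'⟩ := P.hyperplane_separation' (show u ∉ P from hu)
  have hy2 : ⟪y, u⟫ < 0 := by rw [real_inner_comm]; exact hy2'
  have hy1 : ∀ x ∈ K, 0 ≤ ⟪x, y⟫ := fun x hx => hy1' x hx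
  have hvy : ∀ j ∈ s, ⟪v j, -y⟫ ≤ 0 := by
    intro j hj
    have hvj : v j ∈ K := ⟨fun k => if k = j then 1 else 0, fun k _ => by positivity,
      by
        rw [Finset.sum_congr rfl (fun k _ => by
          show (if k = j then (1:ℝ) else 0) • v k = if k = j then v j else 0
          split <;> simp_all)]
        simp [hj]⟩
    have := hy1 _ hvj
    rw [inner_neg_right]
    linarith
  have := h (-y) hvy
  rw [inner_neg_right] at this
  rw [real_inner_comm] at hy2
  linarith

set_option maxHeartbeats 800000 in
lemma exists_antilip (v : J → E) (t : Finset J)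
    (ht : LinearIndependent ℝ (fun j : t => v j)) :
    ∃ K : ℝ, 0 ≤ K ∧ ∀ g : t → ℝ, ‖g‖ ≤ K * ‖combMap v t g‖ := by
  have hker : LinearMap.ker (combMap v t) = ⊥ := by
    rw [LinearMap.ker_eq_bot']
    intro g hg
    exact funext (Fintype.linearIndependent_iff.mp ht g hg)
  let L := combMap v t
  let e : (t → ℝ) ≃ₗ[ℝ] LinearMap.range L :=
    LinearEquiv.ofInjective L (LinearMap.ker_eq_bot.mp hker)
  let ce := e.toContinuousLinearEquiv
  refine ⟨(‖(ce.symm : LinearMap.range L →L[ℝ] (t → ℝ))‖₊ : ℝ), by positivity, fun g => ?_⟩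
  have h1 := ce.antilipschitz.le_mul_dist g 0
  simp only [map_zero, dist_zero_right] at h1
  have h2 : ‖ce g‖ = ‖L g‖ := by
    have : ((ce g : LinearMap.range L) : E) = L g := by
      show ((e g : LinearMap.range L) : E) = L g
      exact LinearEquiv.ofInjective_apply L g
    rw [← this]
    rfl
  rw [h2] at h1
  exact_mod_cast h1

set_option maxHeartbeats 800000 in
lemma exists_comb_const (v : J → E) (t : Finset J) :
    ∃ c : ℝ, 0 < c ∧ (LinearIndependent ℝ (fun j : t => v j) → ∀ lam : J → ℝ,
      (∀ j ∈ t, 0 ≤ lam j) → c * ∑ j ∈ t, lam j ≤ ‖∑ j ∈ t, lam j • v j‖) := by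
  by_cases ht : LinearIndependent ℝ (fun j : t => v j)
  · obtain ⟨K, hKnn, hK⟩ := exists_antilip v t ht
    refine ⟨1 / ((t.card : ℝ) * K + 1), by positivity, fun _ lam hnn => ?_⟩
    set g : t → ℝ := fun j => lam j with hg
    have hbound : ‖g‖ ≤ K * ‖combMap v t g‖ := hK g
    have hLg : combMap v t g = ∑ j ∈ t, lam j • v j := by
      show ∑ j : t, lam j • v j.1 = _
      exact Finset.sum_coe_sort t (fun j => lam j • v j)
    have hsum : ∑ j ∈ t, lam j ≤ (t.card : ℝ) * ‖g‖ := by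
      rw [← Finset.sum_coe_sort t lam]
      calc ∑ j : t, lam j.1 ≤ ∑ _j : t, ‖g‖ := by
            apply Finset.sum_le_sum
            intro j _
            calc lam j.1 ≤ |g j| := le_abs_self _
              _ = ‖g j‖ := rfl
              _ ≤ ‖g‖ := norm_le_pi_norm g j
        _ = (t.card : ℝ) * ‖g‖ := by
            rw [Finset.sum_const]
            simp [mul_comm]
    rw [div_mul_eq_mul_div, one_mul, div_le_iff₀ (by positivity)]
    calc ∑ j ∈ t, lam j ≤ (t.card : ℝ) * ‖g‖ := hsum
      _ ≤ (t.card : ℝ) * (K * ‖combMap v t g‖) := by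
          apply mul_le_mul_of_nonneg_left hbound (by positivity)
      _ = ((t.card : ℝ) * K) * ‖combMap v t g‖ := by ring
      _ ≤ ((t.card : ℝ) * K + 1) * ‖combMap v t g‖ := by
          apply mul_le_mul_of_nonneg_right _ (norm_nonneg _)
          linarith
      _ = ‖∑ j ∈ t, lam j • v j‖ * ((t.card : ℝ) * K + 1) := by rw [hLg]; ring
  · exact ⟨1, one_pos, fun h => absurd h ht⟩

set_option maxHeartbeats 1000000 in
lemma hoffman [Nonempty J] (v : J → E) :
    ∃ τ : ℝ, 0 < τ ∧ ∀ a : J → ℝ, {y : E | ∀ j, a j + ⟪v j, y⟫ ≤ 0}.Nonempty →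
      ∀ x : E, τ * infDist x {y : E | ∀ j, a j + ⟪v j, y⟫ ≤ 0} ≤
        max (Finset.univ.sup' Finset.univ_nonempty (fun j => a j + ⟪v j, x⟫)) 0 := by
  classical
  choose c hc0 hc using fun t : Finset J => exists_comb_const v t
  set τ : ℝ := (Finset.univ : Finset (Finset J)).inf' Finset.univ_nonempty c with hτ
  have hτ0 : 0 < τ := by
    rw [hτ, Finset.lt_inf'_iff]
    exact fun t _ => hc0 t
  have hτle : ∀ t : Finset J, τ ≤ c t := fun t => Finset.inf'_le c (Finset.mem_univ t)
  refine ⟨τ, hτ0, fun a hS x => ?_⟩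
  set S := {y : E | ∀ j, a j + ⟪v j, y⟫ ≤ 0} with hSdef
  have hSeq : S = ⋂ j, {y : E | a j + ⟪v j, y⟫ ≤ 0} := by
    ext y; simp [hSdef, Set.mem_iInter]
  have hlin : ∀ j, IsLinearMap ℝ (fun y : E => ⟪v j, y⟫) := fun j =>
    ⟨fun y z => inner_add_right _ _ _, fun r y => real_inner_smul_right _ _ _⟩
  have hconv : Convex ℝ S := by
    rw [hSeq]
    refine convex_iInter fun j => ?_
    have : {y : E | a j + ⟪v j, y⟫ ≤ 0} = {y : E | ⟪v j, y⟫ ≤ -a j} := by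
      ext y; constructor <;> intro h <;> simp at * <;> linarith
    rw [this]
    exact convex_halfSpace_le (hlin j) _
  have hclosed : IsClosed S := by
    rw [hSeq]
    refine isClosed_iInter fun j => ?_
    exact isClosed_le (continuous_const.add (Continuous.inner continuous_const continuous_id))
      continuous_const
  by_cases hx : x ∈ S
  · rw [Metric.infDist_zero_of_mem hx, mul_zero]
    exact le_max_right _ _
  -- projection
  obtain ⟨y, hyS, hy⟩ := exists_norm_eq_iInf_of_complete_convex hS hclosed.isComplete hconv x
  have hproj : ∀ w ∈ S, ⟪x - y, w - y⟫ ≤ 0 :=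
    (norm_eq_iInf_iff_real_inner_le_zero hconv hyS).mp hy
  have hdist : infDist x S = ‖x - y‖ := by
    rw [Metric.infDist_eq_iInf]
    simp only [dist_eq_norm]
    exact hy.symm
  set u := x - y with hu
  have hune : u ≠ 0 := sub_ne_zero.mpr (fun h => hx (h ▸ hyS))
  have hunorm : 0 < ‖u‖ := norm_pos_iff.mpr hune
  set A : Finset J := Finset.univ.filter (fun j => a j + ⟪v j, y⟫ = 0) with hA
  have hyact : ∀ j ∈ A, a j + ⟪v j, y⟫ = 0 := fun j hj => (Finset.mem_filter.mp hj).2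
  have hyin : ∀ j, a j + ⟪v j, y⟫ ≤ 0 := hyS
  -- tangent cone condition
  have hwu : ∀ w : E, (∀ j ∈ A, ⟪v j, w⟫ ≤ 0) → ⟪u, w⟫ ≤ 0 := by
    intro w hw
    have hex : ∃ t : ℝ, 0 < t ∧ y + t • w ∈ S := by
      set Ac : Finset J := Finset.univ.filter (fun j => ¬(a j + ⟪v j, y⟫ = 0)) with hAc
      by_cases hAcne : Ac.Nonempty
      · set δ : ℝ := Ac.inf' hAcne (fun j => -(a j + ⟪v j, y⟫)) with hδ
        have hδ0 : 0 < δ := by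
          rw [hδ, Finset.lt_inf'_iff]
          intro j hj
          have h1 := hyin j
          have h2 := (Finset.mem_filter.mp hj).2
          cases lt_or_eq_of_le h1 with
          | inl h => linarith
          | inr h => exact absurd h h2
        set M : ℝ := max (Finset.univ.sup' Finset.univ_nonempty (fun j => ⟪v j, w⟫)) 0 with hM
        have hM0 : 0 ≤ M := le_max_right _ _
        have hMb : ∀ j, ⟪v j, w⟫ ≤ M := fun j =>
          le_trans (Finset.le_sup' (fun j => ⟪v j, w⟫) (Finset.mem_univ j)) (le_max_left _ _)
        refine ⟨δ / (M + 1), by positivity, ?_⟩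
        intro j
        rw [inner_add_right, real_inner_smul_right]
        by_cases hj : j ∈ A
        · have := hyact j hj
          have h2 := hw j hj
          have : δ / (M + 1) * ⟪v j, w⟫ ≤ 0 :=
            mul_nonpos_of_nonneg_of_nonpos (by positivity) h2
          linarith [hyact j hj]
        · have hjAc : j ∈ Ac := by
            rw [hAc, Finset.mem_filter]
            exact ⟨Finset.mem_univ _, fun h => hj (by
              rw [hA, Finset.mem_filter]; exact ⟨Finset.mem_univ _, h⟩)⟩
          have h3 : -(a j + ⟪v j, y⟫) ≥ δ := Finset.inf'_le _ hjAc
          have h4 : δ / (M + 1) * ⟪v j, w⟫ ≤ δ / (M + 1) * M :=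
            mul_le_mul_of_nonneg_left (hMb j) (by positivity)
          have h5 : δ / (M + 1) * M < δ := by
            rw [div_mul_eq_mul_div, div_lt_iff₀ (by positivity)]
            nlinarith
          linarith
      · refine ⟨1, one_pos, ?_⟩
        intro j
        have hj : j ∈ A := by
          by_contra hjA
          exact hAcne ⟨j, Finset.mem_filter.mpr ⟨Finset.mem_univ _,
            fun h => hjA (Finset.mem_filter.mpr ⟨Finset.mem_univ _, h⟩)⟩⟩
        rw [inner_add_right, real_inner_smul_right]
        have := hyact j hj
        have := hw j hj
        linarith
    obtain ⟨t, ht0, htS⟩ := hex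
    have := hproj _ htS
    rw [add_sub_cancel_left, real_inner_smul_right] at this
    nlinarith
  -- Farkas + Caratheodory
  obtain ⟨lam, hlamnn, hlameq⟩ := farkas v A u hwu
  obtain ⟨t, htA, hti, mu, hmunn, hmueq⟩ := conic_cara_aux v A.card A le_rfl lam hlamnn
  have hueq : u = ∑ j ∈ t, mu j • v j := by rw [hmueq, ← hlameq]
  set fx : ℝ := Finset.univ.sup' Finset.univ_nonempty (fun j => a j + ⟪v j, x⟫) with hfx
  have hfxge : ∀ j ∈ t, ⟪v j, u⟫ ≤ fx := by
    intro j hj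
    have hjA : j ∈ A := htA hj
    have hxy : x = y + u := (sub_eq_iff_eq_add'.mp hu.symm)
    have : a j + ⟪v j, x⟫ = ⟪v j, u⟫ := by
      rw [hxy, inner_add_right]
      have := hyact j hjA
      linarith
    rw [← this]
    exact Finset.le_sup' (fun j => a j + ⟪v j, x⟫) (Finset.mem_univ j)
  have hnormsq : ‖u‖ ^ 2 = ∑ j ∈ t, mu j * ⟪v j, u⟫ := by
    rw [← real_inner_self_eq_norm_sq]
    nth_rewrite 1 [hueq]
    rw [sum_inner]
    exact Finset.sum_congr rfl fun j _ => real_inner_smul_left _ _ _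
  set smu : ℝ := ∑ j ∈ t, mu j with hsmudef
  have hsmunn : 0 ≤ smu := Finset.sum_nonneg hmunn
  have hsmupos : 0 < smu := by
    rcases lt_or_eq_of_le hsmunn with h | h
    · exact h
    · exfalso
      have : ∀ j ∈ t, mu j = 0 := by
        intro j hj
        have := (Finset.sum_eq_zero_iff_of_nonneg hmunn).mp h.symm
        exact this j hj
      apply hune
      rw [hueq]
      exact Finset.sum_eq_zero fun j hj => by rw [this j hj, zero_smul]
  have hsq_le : ‖u‖ ^ 2 ≤ smu * fx := by
    rw [hnormsq]
    calc ∑ j ∈ t, mu j * ⟪v j, u⟫ ≤ ∑ j ∈ t, mu j * fx :=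
          Finset.sum_le_sum fun j hj => mul_le_mul_of_nonneg_left (hfxge j hj) (hmunn j hj)
      _ = smu * fx := by rw [← Finset.sum_mul]
  have hct : c t * smu ≤ ‖u‖ := by
    rw [hueq]
    exact hc t hti mu hmunn
  have hfinal : τ * ‖u‖ ≤ fx := by
    have h1 : c t * smu * ‖u‖ ≤ ‖u‖ ^ 2 := by nlinarith
    have h2 : c t * smu * ‖u‖ ≤ smu * fx := le_trans h1 hsq_le
    have h3 : c t * ‖u‖ ≤ fx := by
      have := (mul_le_mul_iff_right₀ hsmupos).mp (by nlinarith : smu * (c t * ‖u‖) ≤ smu * fx)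
      exact this
    calc τ * ‖u‖ ≤ c t * ‖u‖ := mul_le_mul_of_nonneg_right (hτle t) (norm_nonneg _)
      _ ≤ fx := h3
  rw [hdist]
  exact le_trans hfinal (le_max_left _ _)

set_option maxHeartbeats 1000000 in
lemma exists_nonpos [Nonempty J] (v : J → E) (a : J → ℝ)
    (hinf : (⨅ x : E, Finset.univ.sup' Finset.univ_nonempty (fun j => a j + ⟪v j, x⟫)) ≤ 0) :
    ∃ y : E, ∀ j, a j + ⟪v j, y⟫ ≤ 0 := by
  classical
  set F : E → ℝ := fun x => Finset.univ.sup' Finset.univ_nonempty (fun j => a j + ⟪v j, x⟫)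
    with hF
  by_cases hbdd : BddBelow (Set.range F)
  · set m : ℝ := ⨅ x, F x with hm
    have hm0 : m ≤ 0 := hinf
    have hmle : ∀ x, m ≤ F x := fun x => ciInf_le hbdd x
    obtain ⟨τ, hτ0, hτ⟩ := hoffman v
    set x₀ : E := 0 with hx₀
    set R : ℝ := (F x₀ - m) / τ + 1 with hR
    have hRpos : 0 < R := by
      have h1 := hmle x₀
      have h2 : 0 ≤ (F x₀ - m) / τ := div_nonneg (by linarith) hτ0.le
      rw [hR]
      linarith
    set T : ℕ → Set E :=
      fun n => {y : E | ∀ j, a j + ⟪v j, y⟫ ≤ m + 1 / (n + 1)} ∩ Metric.closedBall x₀ R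
      with hT
    have hTclosed : ∀ n, IsClosed (T n) := by
      intro n
      apply IsClosed.inter _ Metric.isClosed_closedBall
      have : {y : E | ∀ j, a j + ⟪v j, y⟫ ≤ m + 1 / (n + 1)}
          = ⋂ j, {y : E | a j + ⟪v j, y⟫ ≤ m + 1 / (n + 1)} := by
        ext y; simp [Set.mem_iInter]
      rw [this]
      exact isClosed_iInter fun j => isClosed_le
        (continuous_const.add (Continuous.inner continuous_const continuous_id)) continuous_const
    have hTcompact : ∀ n, IsCompact (T n) :=
      fun n => (isCompact_closedBall x₀ R).inter_left (by
        have h := hTclosed n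
        -- closedness of the first factor
        have : {y : E | ∀ j, a j + ⟪v j, y⟫ ≤ m + 1 / (n + 1)}
            = ⋂ j, {y : E | a j + ⟪v j, y⟫ ≤ m + 1 / (n + 1)} := by
          ext y; simp [Set.mem_iInter]
        rw [this]
        exact isClosed_iInter fun j => isClosed_le
          (continuous_const.add (Continuous.inner continuous_const continuous_id))
          continuous_const)
    have hTne : ∀ n, (T n).Nonempty := by
      intro n
      have hεpos : (0 : ℝ) < 1 / (n + 1) := by positivity
      -- the shifted system
      set a' : J → ℝ := fun j => a j - (m + 1 / (n + 1)) with ha'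
      have hS'ne : {y : E | ∀ j, a' j + ⟪v j, y⟫ ≤ 0}.Nonempty := by
        have : (⨅ x, F x) < m + 1 / (n + 1) := by rw [← hm]; linarith
        obtain ⟨z, hz⟩ := exists_lt_of_ciInf_lt this
        refine ⟨z, fun j => ?_⟩
        have : a j + ⟪v j, z⟫ ≤ F z :=
          Finset.le_sup' (fun j => a j + ⟪v j, z⟫) (Finset.mem_univ j)
        simp only [ha']
        linarith
      have hbound := hτ a' hS'ne x₀
      have hsup_le : Finset.univ.sup' Finset.univ_nonempty (fun j => a' j + ⟪v j, x₀⟫)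
          ≤ F x₀ - m := by
        rw [Finset.sup'_le_iff]
        intro j _
        have : a j + ⟪v j, x₀⟫ ≤ F x₀ :=
          Finset.le_sup' (fun j => a j + ⟪v j, x₀⟫) (Finset.mem_univ j)
        simp only [ha']
        linarith
      have hmax_le : max (Finset.univ.sup' Finset.univ_nonempty (fun j => a' j + ⟪v j, x₀⟫)) 0
          ≤ F x₀ - m := by
        apply max_le hsup_le
        have := hmle x₀
        linarith
      have hdlt : infDist x₀ {y : E | ∀ j, a' j + ⟪v j, y⟫ ≤ 0} < R := by
        rw [hR]
        have h1 : τ * infDist x₀ {y : E | ∀ j, a' j + ⟪v j, y⟫ ≤ 0} ≤ F x₀ - m :=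
          le_trans hbound hmax_le
        have h2 : infDist x₀ {y : E | ∀ j, a' j + ⟪v j, y⟫ ≤ 0} ≤ (F x₀ - m) / τ := by
          rw [le_div_iff₀ hτ0]
          linarith [h1]
        linarith
      obtain ⟨z, hzS, hzd⟩ := (Metric.infDist_lt_iff hS'ne).mp hdlt
      refine ⟨z, ?_, ?_⟩
      · intro j
        have := hzS j
        simp only [ha'] at this
        linarith
      · rw [Metric.mem_closedBall, dist_comm]
        exact hzd.le
    have hTmono : ∀ {p q : ℕ}, p ≤ q → T q ⊆ T p := by
      intro p q hpq z hz
      refine ⟨fun j => ?_, hz.2⟩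
      have h1 := hz.1 j
      have : (1 : ℝ) / (q + 1) ≤ 1 / (p + 1) := by
        apply one_div_le_one_div_of_le (by positivity)
        have : (p : ℝ) ≤ q := Nat.cast_le.mpr hpq
        linarith
      linarith
    have hdir : Directed (fun x1 x2 : Set E => x1 ⊇ x2) T :=
      fun p q => ⟨max p q, hTmono (le_max_left _ _), hTmono (le_max_right _ _)⟩
    obtain ⟨y, hy⟩ := IsCompact.nonempty_iInter_of_directed_nonempty_isCompact_isClosed
      T hdir hTne hTcompact hTclosed
    refine ⟨y, fun j => ?_⟩
    have hyn : ∀ n : ℕ, a j + ⟪v j, y⟫ ≤ m + 1 / (n + 1) := by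
      intro n
      exact ((Set.mem_iInter.mp hy n).1) j
    have : a j + ⟪v j, y⟫ ≤ m := by
      by_contra hcon
      push_neg at hcon
      obtain ⟨n, hn⟩ := exists_nat_one_div_lt (show (0:ℝ) < a j + ⟪v j, y⟫ - m by linarith)
      have := hyn n
      linarith
    linarith
  · rw [not_bddBelow_iff] at hbdd
    obtain ⟨fz, ⟨z, rfl⟩, hz⟩ := hbdd 0
    exact ⟨z, fun j => le_trans
      (Finset.le_sup' (fun j => a j + ⟪v j, z⟫) (Finset.mem_univ j)) hz.le⟩

end Aux

theorem stmt_6 {d : ℕ} {ι : Type*} [Fintype ι] [Nonempty ι]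
    {κ : ι → Type*} [∀ i, Fintype (κ i)] [∀ i, Nonempty (κ i)]
    (a : ∀ i, κ i → ℝ) (v : ∀ i, κ i → EuclideanSpace ℝ (Fin d))
    (fi : ι → EuclideanSpace ℝ (Fin d) → ℝ)
    (f : EuclideanSpace ℝ (Fin d) → ℝ)
    (hfi : ∀ i x, fi i x = Finset.univ.sup' Finset.univ_nonempty (fun j => a i j + ⟪v i j, x⟫))
    (hf : ∀ x, f x = Finset.univ.inf' Finset.univ_nonempty (fun i => fi i x))
    (hinf : ∀ i, (⨅ x, fi i x) ≤ 0) :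
    ∃ τ > (0 : ℝ), ∀ x, τ * Metric.infDist x {y | f y ≤ 0} ≤ max (f x) 0 := by
  classical
  choose τi hτi0 hτi using fun i => hoffman (E := EuclideanSpace ℝ (Fin d)) (v i)
  set τ : ℝ := (Finset.univ : Finset ι).inf' Finset.univ_nonempty τi with hτ
  have hτ0 : 0 < τ := by
    rw [hτ, Finset.lt_inf'_iff]
    exact fun i _ => hτi0 i
  have hτle : ∀ i, τ ≤ τi i := fun i => Finset.inf'_le τi (Finset.mem_univ i)
  -- each S_i is nonempty
  have hSine : ∀ i, {y : EuclideanSpace ℝ (Fin d) | ∀ j, a i j + ⟪v i j, y⟫ ≤ 0}.Nonempty := by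
    intro i
    have h1 : (⨅ x : EuclideanSpace ℝ (Fin d),
        Finset.univ.sup' Finset.univ_nonempty (fun j => a i j + ⟪v i j, x⟫)) ≤ 0 := by
      have : (⨅ x : EuclideanSpace ℝ (Fin d),
          Finset.univ.sup' Finset.univ_nonempty (fun j => a i j + ⟪v i j, x⟫)) = ⨅ x, fi i x :=
        iInf_congr fun x => (hfi i x).symm
      rw [this]
      exact hinf i
    obtain ⟨y, hy⟩ := exists_nonpos (v i) (a i) h1
    exact ⟨y, hy⟩
  refine ⟨τ, hτ0, fun x => ?_⟩
  obtain ⟨i₀, _, hi₀⟩ := Finset.exists_mem_eq_inf' (Finset.univ_nonempty (α := ι))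
    (fun i => fi i x)
  set Si : Set (EuclideanSpace ℝ (Fin d)) := {y | ∀ j, a i₀ j + ⟪v i₀ j, y⟫ ≤ 0} with hSi
  have hsub : Si ⊆ {y | f y ≤ 0} := by
    intro y hy
    have h1 : fi i₀ y ≤ 0 := by
      rw [hfi i₀ y, Finset.sup'_le_iff]
      exact fun j _ => hy j
    have h2 : f y ≤ fi i₀ y := by
      rw [hf y]
      exact Finset.inf'_le (fun i => fi i y) (Finset.mem_univ i₀)
    exact le_trans h2 h1
  have hd : infDist x {y | f y ≤ 0} ≤ infDist x Si :=
    infDist_le_infDist_of_subset hsub (hSine i₀)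
  have hhof : τi i₀ * infDist x Si ≤ max (fi i₀ x) 0 := by
    have := hτi i₀ (a i₀) (hSine i₀) x
    rwa [← hfi i₀ x] at this
  have hfx : f x = fi i₀ x := by rw [hf x, hi₀]
  calc τ * infDist x {y | f y ≤ 0} ≤ τ * infDist x Si :=
        mul_le_mul_of_nonneg_left hd hτ0.le
    _ ≤ τi i₀ * infDist x Si :=
        mul_le_mul_of_nonneg_right (hτle i₀) (infDist_nonneg)
    _ ≤ max (fi i₀ x) 0 := hhof
    _ = max (f x) 0 := by rw [hfx]
end

section
/- Let f : ℝ^d → ℝ be a positively homogeneous piecewise affine function of the form f(x) = min_{i ∈ I} max_{j ∈ J(i)} ⟨v_{ij}, x⟩. Then f has a global error bound: there exists τ > 0 such that τ · dist(x, S(f)) ≤ max{f(x), 0} for all x ∈ ℝ^d, where S(f) = {x | f(x) ≤ 0}. -/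
open scoped RealInnerProductSpace
open Finset Metric

set_option linter.unusedSectionVars false
set_option linter.unnecessarySeqFocus false

section Aux

variable {κ : Type*} [Fintype κ]

theorem sum_subtype_pred {H : Type*} [AddCommMonoid H] (p : κ → Prop) [DecidablePred p]
    (F : κ → H) (hF : ∀ j, ¬ p j → F j = 0) : ∑ j, F j = ∑ j : Subtype p, F j := by
  rw [← Finset.sum_subtype (Finset.univ.filter p) (by simp) F]
  exact (Finset.sum_filter_of_ne (fun x _ h => by_contra fun hp => h (hF x hp))).symm

theorem sum_eq_sum_coe {H : Type*} [AddCommMonoid H] (s : Finset κ)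
    (F : κ → H) (hF : ∀ j ∉ s, F j = 0) : ∑ j, F j = ∑ j : s, F ↑j := by
  rw [Finset.sum_coe_sort s F]
  exact (Finset.sum_subset (Finset.subset_univ s) (fun x _ hx => hF x hx)).symm

variable {H : Type*} [NormedAddCommGroup H] [InnerProductSpace ℝ H] [FiniteDimensional ℝ H]

theorem conic_carath (w : κ → H) (μ : κ → ℝ) (hμ : ∀ j, 0 ≤ μ j) :
    ∃ ν : κ → ℝ, (∀ j, 0 ≤ ν j) ∧ ∑ j, ν j • w j = ∑ j, μ j • w j ∧
      LinearIndependent ℝ (fun j : {j // ν j ≠ 0} => w j) := by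
  classical
  generalize hn : (Finset.univ.filter (fun j => μ j ≠ 0)).card = n
  induction n using Nat.strong_induction_on generalizing μ with
  | _ n ih =>
  by_cases hli : LinearIndependent ℝ (fun j : {j // μ j ≠ 0} => w j)
  · exact ⟨μ, hμ, rfl, hli⟩
  · rw [Fintype.not_linearIndependent_iff] at hli
    obtain ⟨g, hg0, i0, hi0⟩ := hli
    -- build c : κ → ℝ with some positive entry
    have key : ∃ c : κ → ℝ, (∑ j, c j • w j = 0) ∧ (∀ j, c j ≠ 0 → μ j ≠ 0) ∧ ∃ j, 0 < c j := by
      by_cases hp : ∃ i : {j // μ j ≠ 0}, 0 < g i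
      · obtain ⟨i, hi⟩ := hp
        refine ⟨fun j => if h : μ j ≠ 0 then g ⟨j, h⟩ else 0, ?_, ?_, ⟨i, by simp [i.2, hi]⟩⟩
        · rw [sum_subtype_pred (fun j => μ j ≠ 0) _ (fun j hj => by simp [hj]), ← hg0]
          exact Finset.sum_congr rfl (fun j _ => by simp [j.2])
        · intro j hj; by_contra h; simp [h] at hj
      · push_neg at hp
        refine ⟨fun j => if h : μ j ≠ 0 then -g ⟨j, h⟩ else 0, ?_, ?_, ⟨i0, ?_⟩⟩
        · rw [sum_subtype_pred (fun j => μ j ≠ 0) _ (fun j hj => by simp [hj])]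
          rw [show (0 : H) = -∑ i : {j // μ j ≠ 0}, g i • w ↑i by rw [hg0, neg_zero]]
          rw [← Finset.sum_neg_distrib]
          exact Finset.sum_congr rfl (fun j _ => by simp [j.2, neg_smul])
        · intro j hj; by_contra h; simp [h] at hj
        · have h2 := i0.2
          have h3 : g i0 < 0 := lt_of_le_of_ne (hp i0) hi0
          simp only [ne_eq, h2, not_false_eq_true, dite_true, Subtype.eta] <;> simp [h2] <;> linarith
    obtain ⟨c, hc0, hcsupp, ⟨jp, hjp⟩⟩ := key
    set P : Finset κ := Finset.univ.filter (fun j => 0 < c j) with hP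
    have hPne : P.Nonempty := ⟨jp, by simp [hP, hjp]⟩
    set t : ℝ := P.inf' hPne (fun j => μ j / c j) with ht
    have ht0 : 0 ≤ t := by
      apply Finset.le_inf'
      intro j hj
      have hcj : 0 < c j := by simpa [hP] using hj
      exact div_nonneg (hμ j) hcj.le
    obtain ⟨j0, hj0P, hj0⟩ := Finset.exists_mem_eq_inf' hPne (fun j => μ j / c j)
    have hcj0 : 0 < c j0 := by simpa [hP] using hj0P
    set ν : κ → ℝ := fun j => μ j - t * c j with hν
    have hν0 : ∀ j, 0 ≤ ν j := by
      intro j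
      by_cases h : 0 < c j
      · have : t ≤ μ j / c j := Finset.inf'_le _ (by simp [hP, h])
        have := (le_div_iff₀ h).mp this
        show 0 ≤ μ j - t * c j
        linarith
      · push_neg at h
        have : t * c j ≤ 0 := mul_nonpos_of_nonneg_of_nonpos ht0 h
        have := hμ j
        show 0 ≤ μ j - t * c j
        linarith
    have hνsum : ∑ j, ν j • w j = ∑ j, μ j • w j := by
      simp only [hν, sub_smul, Finset.sum_sub_distrib, mul_smul]
      rw [← Finset.smul_sum, hc0, smul_zero, sub_zero]
    have hνj0 : ν j0 = 0 := by
      show μ j0 - t * c j0 = 0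
      rw [ht, hj0, div_mul_cancel₀ _ (ne_of_gt hcj0), sub_self]
    have hνsupp : ∀ j, ν j ≠ 0 → μ j ≠ 0 := by
      intro j hj
      by_contra h
      rcases eq_or_ne (c j) 0 with h2 | h2
      · simp [hν, h, h2] at hj
      · exact hcsupp j h2 h
    have hμj0 : μ j0 ≠ 0 := hcsupp j0 (ne_of_gt hcj0)
    have hcard : (Finset.univ.filter (fun j => ν j ≠ 0)).card < n := by
      rw [← hn]
      apply Finset.card_lt_card
      constructor
      · intro j hj
        simp only [Finset.mem_filter, Finset.mem_univ, true_and] at hj ⊢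
        exact hνsupp j hj
      · intro hsub
        have := hsub (by simp [hμj0] : j0 ∈ Finset.univ.filter (fun j => μ j ≠ 0))
        simp [hνj0] at this
    obtain ⟨ν', h1, h2, h3⟩ := ih _ hcard ν hν0 rfl
    exact ⟨ν', h1, h2.trans hνsum, h3⟩

theorem indep_bound (w : κ → H) (p : κ → Prop) [DecidablePred p]
    (hli : LinearIndependent ℝ (fun j : Subtype p => w j)) :
    ∃ C : ℝ, 0 ≤ C ∧ ∀ μ : κ → ℝ, (∀ j, ¬ p j → μ j = 0) →
      ∑ j, |μ j| ≤ C * ‖∑ j, μ j • w j‖ := by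
  classical
  set T : (Subtype p → ℝ) →ₗ[ℝ] H :=
    { toFun := fun lam => ∑ j : Subtype p, lam j • w j
      map_add' := fun a b => by simp [add_smul, Finset.sum_add_distrib]
      map_smul' := fun r a => by simp [mul_smul, Finset.smul_sum] } with hT
  have hinj : Function.Injective T := by
    rw [← LinearMap.ker_eq_bot, LinearMap.ker_eq_bot']
    intro m hm
    have := Fintype.linearIndependent_iff.mp hli m hm
    funext j; exact this j
  set e := LinearEquiv.ofInjective T hinj with he
  set g := (e.symm.toLinearMap).toContinuousLinearMap with hg
  refine ⟨(Fintype.card (Subtype p) : ℝ) * ‖g‖, by positivity, ?_⟩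
  intro μ hμ
  set lam : Subtype p → ℝ := fun j => μ j with hlam
  have hTlam : T lam = ∑ j, μ j • w j :=
    (sum_subtype_pred p (fun j => μ j • w j) (fun j hj => by simp [hμ j hj])).symm
  have hnorm : ‖lam‖ ≤ ‖g‖ * ‖T lam‖ := by
    have h1 : lam = g (e lam) := (e.symm_apply_apply lam).symm
    have h2 : ‖(e lam : H)‖ = ‖T lam‖ := by
      rw [LinearEquiv.ofInjective_apply]
    calc ‖lam‖ = ‖g (e lam)‖ := by rw [← h1]
      _ ≤ ‖g‖ * ‖e lam‖ := g.le_opNorm _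
      _ = ‖g‖ * ‖T lam‖ := by rw [← h2]; rfl
  calc ∑ j, |μ j| = ∑ j : Subtype p, |μ ↑j| :=
        sum_subtype_pred p (fun j => |μ j|) (fun j hj => by simp [hμ j hj])
    _ ≤ ∑ _j : Subtype p, ‖lam‖ := by
        apply Finset.sum_le_sum
        intro j _
        exact norm_le_pi_norm lam j
    _ = (Fintype.card (Subtype p) : ℝ) * ‖lam‖ := by
        rw [Finset.sum_const, Finset.card_univ, nsmul_eq_mul]
    _ ≤ (Fintype.card (Subtype p) : ℝ) * (‖g‖ * ‖T lam‖) := by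
        apply mul_le_mul_of_nonneg_left hnorm (by positivity)
    _ = (Fintype.card (Subtype p) : ℝ) * ‖g‖ * ‖∑ j, μ j • w j‖ := by
        rw [hTlam]; ring

/-- A linearly independent family over a finset predicate, transferred. -/
theorem li_transfer (w : κ → H) (ν : κ → ℝ)
    (h : LinearIndependent ℝ (fun j : {j // ν j ≠ 0} => w j)) [DecidableEq κ] :
    LinearIndependent ℝ
      (fun j : {j // j ∈ Finset.univ.filter (fun j => ν j ≠ 0)} => w j) := by
  classical
  have h2 := (linearIndependent_equiv
    (Equiv.subtypeEquivRight (p := fun j => j ∈ Finset.univ.filter fun j => ν j ≠ 0)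
      (q := fun j => ν j ≠ 0) (by simp))).mpr h
  exact h2

/-- Bounded conical representation. -/
theorem rep_bound (w : κ → H) :
    ∃ M : ℝ, 0 < M ∧ ∀ lam : κ → ℝ, (∀ j, 0 ≤ lam j) →
      ∃ ν : κ → ℝ, (∀ j, 0 ≤ ν j) ∧ (∑ j, ν j • w j = ∑ j, lam j • w j) ∧
        ∑ j, ν j ≤ M * ‖∑ j, lam j • w j‖ := by
  classical
  have hCs : ∀ s : Finset κ, ∃ C : ℝ, 0 ≤ C ∧
      (LinearIndependent ℝ (fun j : {j // j ∈ s} => w j) →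
        ∀ μ : κ → ℝ, (∀ j, ¬ j ∈ s → μ j = 0) → ∑ j, |μ j| ≤ C * ‖∑ j, μ j • w j‖) := by
    intro s
    by_cases h : LinearIndependent ℝ (fun j : {j // j ∈ s} => w j)
    · obtain ⟨C, hC0, hC⟩ := indep_bound w (fun j => j ∈ s) h
      exact ⟨C, hC0, fun _ => hC⟩
    · exact ⟨0, le_rfl, fun h' => absurd h' h⟩
  choose C hC0 hC using hCs
  have hsum0 : 0 ≤ ∑ s : Finset κ, C s := Finset.sum_nonneg (fun t _ => hC0 t)
  refine ⟨1 + ∑ s : Finset κ, C s, by linarith, ?_⟩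
  intro lam hlam
  obtain ⟨ν, hν0, hνsum, hli⟩ := conic_carath w lam hlam
  set s : Finset κ := Finset.univ.filter (fun j => ν j ≠ 0) with hs
  have hli' := li_transfer w ν hli
  have hsupp : ∀ j, ¬ j ∈ s → ν j = 0 := by intro j hj; by_contra h; exact hj (by simp [hs, h])
  have hb := hC s hli' ν hsupp
  refine ⟨ν, hν0, hνsum, ?_⟩
  have h1 : ∑ j, ν j ≤ ∑ j, |ν j| := Finset.sum_le_sum (fun j _ => le_abs_self _)
  have h2 : C s ≤ 1 + ∑ t : Finset κ, C t := by
    have := Finset.single_le_sum (f := C) (fun t _ => hC0 t) (Finset.mem_univ s)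
    linarith
  calc ∑ j, ν j ≤ ∑ j, |ν j| := h1
    _ ≤ C s * ‖∑ j, ν j • w j‖ := hb
    _ ≤ (1 + ∑ t : Finset κ, C t) * ‖∑ j, ν j • w j‖ :=
        mul_le_mul_of_nonneg_right h2 (norm_nonneg _)
    _ = (1 + ∑ t : Finset κ, C t) * ‖∑ j, lam j • w j‖ := by rw [hνsum]

/-- The finitely generated cone is closed. -/
theorem cone_isClosed (w : κ → H) :
    IsClosed {u : H | ∃ lam : κ → ℝ, (∀ j, 0 ≤ lam j) ∧ ∑ j, lam j • w j = u} := by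
  classical
  have key : {u : H | ∃ lam : κ → ℝ, (∀ j, 0 ≤ lam j) ∧ ∑ j, lam j • w j = u} =
      ⋃ s ∈ {s : Finset κ | LinearIndependent ℝ (fun j : {j // j ∈ s} => w j)},
        (fun lam : (s → ℝ) => ∑ j : s, lam j • w ↑j) ''
          {lam | ∀ j, 0 ≤ lam j} := by
    ext u
    simp only [Set.mem_iUnion, Set.mem_image, Set.mem_setOf_eq]
    constructor
    · rintro ⟨lam, hlam, rfl⟩
      obtain ⟨ν, hν0, hνsum, hli⟩ := conic_carath w lam hlam
      refine ⟨Finset.univ.filter (fun j => ν j ≠ 0), li_transfer w ν hli,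
        fun j => ν ↑j, fun j => hν0 _, ?_⟩
      rw [← hνsum]
      exact (sum_eq_sum_coe _ (fun j => ν j • w j) (fun j hj => by
          have : ν j = 0 := by by_contra h; exact hj (by simp [h])
          simp [this])).symm
    · rintro ⟨s, hsli, lam, hlam, rfl⟩
      refine ⟨fun j => if h : j ∈ s then lam ⟨j, h⟩ else 0, ?_, ?_⟩
      · intro j
        by_cases h : j ∈ s
        · simpa [h] using hlam ⟨j, h⟩
        · simp [h]
      · rw [sum_eq_sum_coe s _ (fun j hj => by simp [hj])]
        exact Finset.sum_congr rfl (fun j _ => by simp [j.2])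
  rw [key]
  apply Set.Finite.isClosed_biUnion (Set.toFinite _)
  intro s hsli
  set T : (s → ℝ) →ₗ[ℝ] H :=
    { toFun := fun lam => ∑ j : s, lam j • w ↑j
      map_add' := fun a b => by simp [add_smul, Finset.sum_add_distrib]
      map_smul' := fun r a => by simp [mul_smul, Finset.smul_sum] } with hT
  have hker : LinearMap.ker T = ⊥ := by
    rw [LinearMap.ker_eq_bot']
    intro m hm
    have := Fintype.linearIndependent_iff.mp hsli m hm
    funext j; exact this j
  have hemb := LinearMap.isClosedEmbedding_of_injective hker
  have horth : IsClosed {lam : s → ℝ | ∀ j, 0 ≤ lam j} := by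
    have : {lam : s → ℝ | ∀ j, 0 ≤ lam j} = ⋂ j, {lam | 0 ≤ lam j} := by
      ext; simp
    rw [this]
    exact isClosed_iInter (fun j => isClosed_le continuous_const (continuous_apply j))
  exact hemb.isClosedMap _ horth

/-- Farkas: if `⟪u, c⟫ ≤ 0` for every `c` in the polar system, `u` is a nonneg combination. -/
theorem farkas_s7 (w : κ → H) (u : H) (hu : ∀ c : H, (∀ j, ⟪w j, c⟫ ≤ 0) → ⟪u, c⟫ ≤ 0) :
    ∃ lam : κ → ℝ, (∀ j, 0 ≤ lam j) ∧ ∑ j, lam j • w j = u := by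
  classical
  set K : ConvexCone ℝ H :=
    { carrier := {u : H | ∃ lam : κ → ℝ, (∀ j, 0 ≤ lam j) ∧ ∑ j, lam j • w j = u}
      smul_mem' := by
        rintro c hc x ⟨lam, hlam, rfl⟩
        exact ⟨fun j => c * lam j, fun j => mul_nonneg hc.le (hlam j),
          by rw [Finset.smul_sum]; exact Finset.sum_congr rfl fun j _ => (mul_smul _ _ _)⟩
      add_mem' := by
        rintro x ⟨lam, hlam, rfl⟩ y ⟨lam', hlam', rfl⟩
        exact ⟨fun j => lam j + lam' j, fun j => add_nonneg (hlam j) (hlam' j),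
          by rw [← Finset.sum_add_distrib]; exact Finset.sum_congr rfl fun j _ =>
            (add_smul _ _ _)⟩ } with hK
  by_contra hcon
  have hne : (K : Set H).Nonempty := ⟨0, ⟨fun _ => 0, fun _ => le_rfl, by simp⟩⟩
  have hclosed : IsClosed (K : Set H) := cone_isClosed w
  have hnm : u ∉ K := fun h => hcon h
  obtain ⟨y, hy1, hy2⟩ : ∃ y, (∀ x ∈ K, 0 ≤ ⟪x, y⟫) ∧ ⟪u, y⟫ < 0 := by
    let P : ProperCone ℝ H :=
      { carrier := (K : Set H)
        add_mem' := fun ha hb => K.add_mem ha hb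
        zero_mem' := ⟨fun _ => 0, fun _ => le_rfl, by simp⟩
        smul_mem' := by
          rintro c x ⟨lam, hlam, rfl⟩
          refine ⟨fun j => (c : ℝ) * lam j, fun j => mul_nonneg c.2 (hlam j), ?_⟩
          rw [Finset.smul_sum]
          refine Finset.sum_congr rfl fun j _ => ?_
          exact mul_smul (c : ℝ) (lam j) (w j)
        isClosed' := hclosed }
    exact P.hyperplane_separation' (x₀ := u) (fun h => hnm h)
  have hwy : ∀ j, 0 ≤ ⟪w j, y⟫ := by
    intro j
    apply hy1
    exact ⟨fun k => if k = j then 1 else 0, fun k => by positivity,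
      by simp [ite_smul]⟩
  have h1 : ⟪u, -y⟫ ≤ 0 := hu (-y) (fun j => by rw [inner_neg_right]; linarith [hwy j])
  rw [inner_neg_right] at h1
  have : 0 ≤ ⟪y, u⟫ := by rw [real_inner_comm]; linarith
  linarith

/-- Hoffman error bound for a single polyhedral cone. -/
theorem hoffman_cone (w : κ → H) [Nonempty κ] :
    ∃ τ : ℝ, 0 < τ ∧ ∀ x : H, τ * infDist x {y : H | ∀ j, ⟪w j, y⟫ ≤ 0} ≤
      max (Finset.univ.sup' Finset.univ_nonempty (fun j => ⟪w j, x⟫)) 0 := by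
  classical
  obtain ⟨M, hM, hMrep⟩ := rep_bound w
  set C : Set H := {y : H | ∀ j, ⟪w j, y⟫ ≤ 0} with hC
  have hCne : C.Nonempty := ⟨0, fun j => by simp⟩
  have hCclosed : IsClosed C := by
    have : C = ⋂ j, {y : H | ⟪w j, y⟫ ≤ 0} := by ext; simp [hC]
    rw [this]
    exact isClosed_iInter fun j =>
      isClosed_le (Continuous.inner continuous_const continuous_id) continuous_const
  have hCconv : Convex ℝ C := by
    have : C = ⋂ j, {y : H | ⟪w j, y⟫ ≤ 0} := by ext; simp [hC]
    rw [this]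
    exact convex_iInter fun j => convex_halfSpace_le
      ⟨fun a b => inner_add_right _ _ _, fun r a => real_inner_smul_right _ _ _⟩ 0
  have hCadd : ∀ a ∈ C, ∀ b ∈ C, a + b ∈ C := by
    intro a ha b hb j
    rw [inner_add_right]
    linarith [ha j, hb j]
  refine ⟨M⁻¹, by positivity, ?_⟩
  intro x
  set R : ℝ := max (Finset.univ.sup' Finset.univ_nonempty (fun j => ⟪w j, x⟫)) 0 with hR
  have hR0 : 0 ≤ R := le_max_right _ _
  obtain ⟨p, hpC, hproj⟩ :=
    exists_norm_eq_iInf_of_complete_convex hCne hCclosed.isComplete hCconv x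
  have hdist : infDist x C = ‖x - p‖ := by
    rw [Metric.infDist_eq_iInf, hproj]
    congr 1
    ext y
    rw [dist_eq_norm]
  have hvar : ∀ z ∈ C, ⟪x - p, z - p⟫ ≤ 0 :=
    (norm_eq_iInf_iff_real_inner_le_zero hCconv hpC).mp hproj
  set u : H := x - p with hu
  have hup : ⟪u, p⟫ = 0 := by
    have h1 := hvar 0 (fun j => by simp)
    have h2 := hvar (p + p) (hCadd p hpC p hpC)
    rw [zero_sub, inner_neg_right] at h1
    rw [add_sub_cancel_right] at h2
    linarith
  have hupolar : ∀ c ∈ C, ⟪u, c⟫ ≤ 0 := by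
    intro c hc
    have := hvar (p + c) (hCadd p hpC c hc)
    rwa [add_sub_cancel_left] at this
  obtain ⟨lam, hlam0, hlamsum⟩ := farkas_s7 w u (fun c hc => hupolar c hc)
  obtain ⟨ν, hν0, hνeq, hνbound⟩ := hMrep lam hlam0
  rw [hlamsum] at hνeq hνbound
  have hkey : ‖u‖ ^ 2 ≤ M * ‖u‖ * R := by
    have h1 : ‖u‖ ^ 2 = ⟪u, x⟫ := by
      rw [show x = u + p by rw [hu]; abel, inner_add_right, hup, add_zero,
        real_inner_self_eq_norm_sq]
    have h2 : ⟪u, x⟫ = ∑ j, ν j * ⟪w j, x⟫ := by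
      rw [← hνeq, sum_inner]
      exact Finset.sum_congr rfl fun j _ => real_inner_smul_left _ _ _
    have h3 : ∑ j, ν j * ⟪w j, x⟫ ≤ ∑ j, ν j * R := by
      apply Finset.sum_le_sum
      intro j _
      apply mul_le_mul_of_nonneg_left _ (hν0 j)
      exact le_trans (Finset.le_sup' (fun j => ⟪w j, x⟫) (Finset.mem_univ j)) (le_max_left _ _)
    have h4 : ∑ j, ν j * R = (∑ j, ν j) * R := by rw [Finset.sum_mul]
    have h5 : (∑ j, ν j) * R ≤ M * ‖u‖ * R := by
      apply mul_le_mul_of_nonneg_right _ hR0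
      exact hνbound
    linarith [h1, h2.le, h3, h5]
  rw [hdist]
  rcases eq_or_lt_of_le (norm_nonneg u) with h | h
  · rw [← h, mul_zero]; exact hR0
  · rw [inv_mul_le_iff₀ hM]
    have h2 : ‖u‖ * ‖u‖ ≤ (M * R) * ‖u‖ := by
      calc ‖u‖ * ‖u‖ = ‖u‖ ^ 2 := by ring
        _ ≤ M * ‖u‖ * R := hkey
        _ = (M * R) * ‖u‖ := by ring
    exact le_of_mul_le_mul_right h2 h

end Aux

theorem stmt_7 {d : ℕ} {ι : Type*} [Fintype ι] [Nonempty ι]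
    {κ : ι → Type*} [∀ i, Fintype (κ i)] [∀ i, Nonempty (κ i)]
    (v : ∀ i, κ i → EuclideanSpace ℝ (Fin d))
    (f : EuclideanSpace ℝ (Fin d) → ℝ)
    (hf : ∀ x, f x = Finset.univ.inf' Finset.univ_nonempty
        (fun i => Finset.univ.sup' Finset.univ_nonempty (fun j => ⟪v i j, x⟫))) :
    ∃ τ > (0 : ℝ), ∀ x, τ * Metric.infDist x {y | f y ≤ 0} ≤ max (f x) 0 := by
  classical
  have hτ : ∀ i : ι, ∃ τ : ℝ, 0 < τ ∧ ∀ x : EuclideanSpace ℝ (Fin d),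
      τ * Metric.infDist x {y | ∀ j, ⟪v i j, y⟫ ≤ 0} ≤
        max (Finset.univ.sup' Finset.univ_nonempty (fun j => ⟪v i j, x⟫)) 0 :=
    fun i => hoffman_cone (v i)
  choose τ hτ0 hτle using hτ
  refine ⟨Finset.univ.inf' Finset.univ_nonempty τ, ?_, ?_⟩
  · show (0 : ℝ) < Finset.univ.inf' Finset.univ_nonempty τ
    rw [Finset.lt_inf'_iff]
    exact fun i _ => hτ0 i
  intro x
  obtain ⟨i, _, hi⟩ := Finset.exists_mem_eq_inf' Finset.univ_nonempty
    (fun i => Finset.univ.sup' Finset.univ_nonempty (fun j => ⟪v i j, x⟫))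
  have hfx : f x = Finset.univ.sup' Finset.univ_nonempty (fun j => ⟪v i j, x⟫) := by
    rw [hf x, hi]
  have hsub : {y : EuclideanSpace ℝ (Fin d) | ∀ j, ⟪v i j, y⟫ ≤ 0} ⊆ {y | f y ≤ 0} := by
    intro y hy
    simp only [Set.mem_setOf_eq]
    rw [hf y]
    refine le_trans (Finset.inf'_le _ (Finset.mem_univ i)) ?_
    exact Finset.sup'_le _ _ fun j _ => hy j
  have hne : ({y : EuclideanSpace ℝ (Fin d) | ∀ j, ⟪v i j, y⟫ ≤ 0}).Nonempty :=
    ⟨0, fun j => by simp⟩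
  have h1 : Metric.infDist x {y | f y ≤ 0} ≤
      Metric.infDist x {y | ∀ j, ⟪v i j, y⟫ ≤ 0} :=
    Metric.infDist_le_infDist_of_subset hsub hne
  calc Finset.univ.inf' Finset.univ_nonempty τ * Metric.infDist x {y | f y ≤ 0}
      ≤ τ i * Metric.infDist x {y | ∀ j, ⟪v i j, y⟫ ≤ 0} :=
        mul_le_mul (Finset.inf'_le _ (Finset.mem_univ i)) h1 Metric.infDist_nonneg (hτ0 i).le
    _ ≤ max (Finset.univ.sup' Finset.univ_nonempty (fun j => ⟪v i j, x⟫)) 0 := hτle i x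
    _ = max (f x) 0 := by rw [hfx]
end

section
/- Let f : ℝ^d → ℝ be any function with S(f) = {x | f(x) ≤ 0} nonempty, and suppose there exist r > 0 and a > 0 such that f(x) ≥ a‖x‖ whenever ‖x‖ ≥ r. If additionally f has an error bound on every bounded set, then f has a global error bound: there exists τ > 0 with τ · dist(x, S(f)) ≤ max{f(x), 0} for all x ∈ ℝ^d. -/
theorem stmt_10 {d : ℕ} (f : EuclideanSpace ℝ (Fin d) → ℝ)
    (hS : {x | f x ≤ 0}.Nonempty)
    (hgrowth : ∃ r > (0 : ℝ), ∃ c > (0 : ℝ), ∀ x, r ≤ ‖x‖ → c * ‖x‖ ≤ f x)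
    (hloc : ∀ V : Set (EuclideanSpace ℝ (Fin d)), Bornology.IsBounded V →
      ∃ τ > (0 : ℝ), ∀ x ∈ V, τ * Metric.infDist x {y | f y ≤ 0} ≤ max (f x) 0) :
    ∃ τ > (0 : ℝ), ∀ x, τ * Metric.infDist x {y | f y ≤ 0} ≤ max (f x) 0 := by
  obtain ⟨r, hr, c, hc, hg⟩ := hgrowth
  obtain ⟨y0, hy0⟩ := hS
  obtain ⟨τ₁, hτ₁, hloc₁⟩ := hloc (Metric.closedBall 0 r) Metric.isBounded_closedBall
  set M : ℝ := 1 + ‖y0‖ / r with hM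
  have hMpos : 0 < M := by positivity
  set τ₂ : ℝ := c / M with hτ₂def
  have hτ₂ : 0 < τ₂ := by positivity
  clear_value M τ₂
  refine ⟨min τ₁ τ₂, lt_min hτ₁ hτ₂, fun x => ?_⟩
  have hdnn : 0 ≤ Metric.infDist x {y | f y ≤ 0} := Metric.infDist_nonneg
  by_cases hx : ‖x‖ ≤ r
  · calc min τ₁ τ₂ * Metric.infDist x {y | f y ≤ 0}
        ≤ τ₁ * Metric.infDist x {y | f y ≤ 0} :=
          mul_le_mul_of_nonneg_right (min_le_left _ _) hdnn
      _ ≤ max (f x) 0 := hloc₁ x (by simpa [Metric.mem_closedBall, dist_zero_right] using hx)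
  · push_neg at hx
    have hd : Metric.infDist x {y | f y ≤ 0} ≤ ‖x‖ + ‖y0‖ := by
      calc Metric.infDist x {y | f y ≤ 0} ≤ dist x y0 := Metric.infDist_le_dist_of_mem hy0
        _ = ‖x - y0‖ := dist_eq_norm _ _
        _ ≤ ‖x‖ + ‖y0‖ := norm_sub_le _ _
    have hMx : ‖x‖ + ‖y0‖ ≤ M * ‖x‖ := by
      have : ‖y0‖ ≤ ‖y0‖ / r * ‖x‖ := by
        rw [div_mul_eq_mul_div, le_div_iff₀ hr]
        exact mul_le_mul_of_nonneg_left hx.le (norm_nonneg _)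
      have h2 : M * ‖x‖ = ‖x‖ + ‖y0‖ / r * ‖x‖ := by rw [hM]; ring
      linarith
    calc min τ₁ τ₂ * Metric.infDist x {y | f y ≤ 0}
        ≤ τ₂ * Metric.infDist x {y | f y ≤ 0} :=
          mul_le_mul_of_nonneg_right (min_le_right _ _) hdnn
      _ ≤ τ₂ * (M * ‖x‖) := mul_le_mul_of_nonneg_left (hd.trans hMx) hτ₂.le
      _ = c * ‖x‖ := by field_simp [hτ₂def]; rw [hτ₂def, div_mul_cancel₀ c hMpos.ne']; ring
      _ ≤ f x := hg x hx.le
      _ ≤ max (f x) 0 := le_max_left _ _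
end

section
/- Let X ⊆ ℝ^d be a nonempty finite union of polyhedral sets and x, z ∈ ℝ^d. If z does not belong to the recession cone 0⁺X, then dist(x + λz, X) → +∞ as λ → +∞. -/
/-!
If `z` is not a recession direction of a nonempty polyhedral piece `{x | ∀ j, ⟪v j, x⟫ ≤ b j}`,
then some constraint has `⟪v j, z⟫ > 0`. Along `x + t • z` the constraint `⟪v j, ·⟫ ≤ b j` is
violated by an amount growing linearly in `t`, so the distance to that half-space, hence to the
piece, tends to infinity. The distance to a finite union is the minimum over its nonempty pieces.
-/

open scoped RealInnerProductSpace

/-- A polyhedral set: a finite intersection of closed half-spaces. -/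
def IsPolyhedral {d : ℕ} (Q : Set (EuclideanSpace ℝ (Fin d))) : Prop :=
  ∃ (n : ℕ) (v : Fin n → EuclideanSpace ℝ (Fin d)) (b : Fin n → ℝ),
    Q = {x | ∀ j, ⟪v j, x⟫ ≤ b j}

/-- A finite union of polyhedral sets. -/
def IsFinUnionPolyhedral {d : ℕ} (X : Set (EuclideanSpace ℝ (Fin d))) : Prop :=
  ∃ (s : ℕ) (Q : Fin s → Set (EuclideanSpace ℝ (Fin d))),
    (∀ i, IsPolyhedral (Q i)) ∧ X = ⋃ i, Q i

/-- The recession cone of a set. -/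
def recCone {d : ℕ} (X : Set (EuclideanSpace ℝ (Fin d))) : Set (EuclideanSpace ℝ (Fin d)) :=
  {z | ∃ x ∈ X, ∀ t : ℝ, 0 ≤ t → x + t • z ∈ X}

open Filter Metric

theorem Metric.tendsto_infDist_iUnion_atTop {α β ι : Type*} [PseudoMetricSpace α] [Finite ι]
    {l : Filter β} {f : β → α} {S : ι → Set α} (hne : (⋃ i, S i).Nonempty)
    (h : ∀ i, (S i).Nonempty → Tendsto (fun t => infDist (f t) (S i)) l atTop) :
    Tendsto (fun t => infDist (f t) (⋃ i, S i)) l atTop := by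
  refine Filter.tendsto_atTop.2 fun M => ?_
  have hpiece : ∀ i, ∀ᶠ t in l, ∀ y ∈ S i, M ≤ dist (f t) y := by
    intro i
    rcases (S i).eq_empty_or_nonempty with hempty | hi
    · simp [hempty]
    · filter_upwards [Filter.tendsto_atTop.1 (h i hi) M] with t ht y hy
      exact ht.trans (infDist_le_dist_of_mem hy)
  filter_upwards [eventually_all.2 hpiece] with t ht
  refine (le_infDist hne).2 fun y hy => ?_
  obtain ⟨i, hyi⟩ := Set.mem_iUnion.1 hy
  exact ht i y hyi

section HalfSpace

variable {E : Type*} [NormedAddCommGroup E] [InnerProductSpace ℝ E]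

theorem inner_sub_div_norm_le_infDist {Q : Set E} {v : E} {b : ℝ} (hv : v ≠ 0)
    (hQ : Q ⊆ {q | ⟪v, q⟫ ≤ b}) (hne : Q.Nonempty) (y : E) :
    (⟪v, y⟫ - b) / ‖v‖ ≤ infDist y Q := by
  refine (le_infDist hne).2 fun q hq => ?_
  rw [div_le_iff₀ (norm_pos_iff.2 hv), dist_eq_norm, mul_comm]
  calc ⟪v, y⟫ - b ≤ ⟪v, y⟫ - ⟪v, q⟫ := by linarith [show ⟪v, q⟫ ≤ b from hQ hq]
    _ = ⟪v, y - q⟫ := (inner_sub_right v y q).symm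
    _ ≤ ‖v‖ * ‖y - q‖ := real_inner_le_norm v (y - q)

theorem tendsto_infDist_add_smul_atTop_of_subset_halfspace {Q : Set E} {v : E} {b : ℝ}
    (hQ : Q ⊆ {q | ⟪v, q⟫ ≤ b}) (hne : Q.Nonempty) (x : E) {z : E} (hz : 0 < ⟪v, z⟫) :
    Tendsto (fun t : ℝ => infDist (x + t • z) Q) atTop atTop := by
  have hv : v ≠ 0 := by
    rintro rfl
    simp at hz
  have hlinear : Tendsto (fun t : ℝ => (t * ⟪v, z⟫ + (⟪v, x⟫ - b)) / ‖v‖) atTop atTop :=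
    (tendsto_atTop_add_const_right _ _ (tendsto_id.atTop_mul_const hz)).atTop_div_const
      (norm_pos_iff.2 hv)
  refine tendsto_atTop_mono (fun t => ?_) hlinear
  refine le_of_eq_of_le ?_ (inner_sub_div_norm_le_infDist hv hQ hne (x + t • z))
  rw [inner_add_right, real_inner_smul_right]
  ring

end HalfSpace

section RecessionCone

variable {d : ℕ}

theorem recCone_mono {Q X : Set (EuclideanSpace ℝ (Fin d))} (h : Q ⊆ X) :
    recCone Q ⊆ recCone X := by
  rintro z ⟨w, hw, hray⟩
  exact ⟨w, h hw, fun t ht => h (hray t ht)⟩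

theorem mem_recCone_of_inner_nonpos {n : ℕ} {v : Fin n → EuclideanSpace ℝ (Fin d)}
    {b : Fin n → ℝ} (hne : {x | ∀ j, ⟪v j, x⟫ ≤ b j}.Nonempty)
    {z : EuclideanSpace ℝ (Fin d)} (hz : ∀ j, ⟪v j, z⟫ ≤ 0) :
    z ∈ recCone {x | ∀ j, ⟪v j, x⟫ ≤ b j} := by
  obtain ⟨w, hw⟩ := hne
  refine ⟨w, hw, fun t ht j => ?_⟩
  rw [inner_add_right, real_inner_smul_right]
  nlinarith [hw j, hz j]

theorem IsPolyhedral.tendsto_infDist_add_smul_atTop {Q : Set (EuclideanSpace ℝ (Fin d))}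
    (hQ : IsPolyhedral Q) (hne : Q.Nonempty) (x : EuclideanSpace ℝ (Fin d))
    {z : EuclideanSpace ℝ (Fin d)} (hz : z ∉ recCone Q) :
    Tendsto (fun t : ℝ => infDist (x + t • z) Q) atTop atTop := by
  obtain ⟨n, v, b, rfl⟩ := hQ
  obtain ⟨j, hj⟩ : ∃ j, 0 < ⟪v j, z⟫ := by
    by_contra! hnonpos
    exact hz (mem_recCone_of_inner_nonpos hne hnonpos)
  have hsub : {x | ∀ j, ⟪v j, x⟫ ≤ b j} ⊆ {q | ⟪v j, q⟫ ≤ b j} := fun _ hq => hq j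
  exact tendsto_infDist_add_smul_atTop_of_subset_halfspace hsub hne x hj

end RecessionCone

theorem stmt_12 {d : ℕ} (X : Set (EuclideanSpace ℝ (Fin d)))
    (hX : IsFinUnionPolyhedral X) (hXne : X.Nonempty)
    (x z : EuclideanSpace ℝ (Fin d)) (hz : z ∉ recCone X) :
    Filter.Tendsto (fun t : ℝ => Metric.infDist (x + t • z) X) Filter.atTop Filter.atTop := by
  obtain ⟨s, Q, hQ, rfl⟩ := hX
  exact tendsto_infDist_iUnion_atTop hXne fun i hi =>
    (hQ i).tendsto_infDist_add_smul_atTop hi x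
      fun hzi => hz (recCone_mono (Set.subset_iUnion Q i) hzi)
end

section
/- There exist a closed convex cone Y ⊆ ℝ³ and a closed convex cone V ⊆ ℝ³ (V not polyhedral) such that for every C > 0 there exists x ∈ V with dist(x, Y ∩ V) > C · dist(x, Y). Concretely, one may take Y = {x | x₁ = 0} and V the conic hull of the disc {x | (x₁ − 1)² + x₂² ≤ 1, x₃ = 1}. -/
open Metric Real

-- Cauchy-Schwarz style key inequality for convexity of the second-order cone
lemma soc_key (u0 u1 s v0 v1 t a b : ℝ) (hu : u0^2 + u1^2 ≤ s^2) (hv : v0^2 + v1^2 ≤ t^2)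
    (hs : 0 ≤ s) (ht : 0 ≤ t) (ha : 0 ≤ a) (hb : 0 ≤ b) :
    (a*u0 + b*v0)^2 + (a*u1 + b*v1)^2 ≤ (a*s + b*t)^2 := by
  have hcs : u0*v0 + u1*v1 ≤ s*t := by
    have h1 : (u0*v0 + u1*v1)^2 ≤ (s*t)^2 := by
      nlinarith [sq_nonneg (u0*v1 - u1*v0),
        mul_le_mul hu hv (by positivity) (sq_nonneg s)]
    nlinarith [h1, mul_nonneg hs ht]
  nlinarith [hcs, hu, hv, sq_nonneg a, sq_nonneg b, mul_nonneg ha hb]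

theorem stmt_14 :
    ∃ Y V : Set (EuclideanSpace ℝ (Fin 3)),
      IsClosed Y ∧ Convex ℝ Y ∧ (∀ x ∈ Y, ∀ t : ℝ, 0 ≤ t → t • x ∈ Y) ∧
      IsClosed V ∧ Convex ℝ V ∧ (∀ x ∈ V, ∀ t : ℝ, 0 ≤ t → t • x ∈ V) ∧
      Y = {x | x 0 = 0} ∧
      V = {x | ∃ t : ℝ, 0 ≤ t ∧ ∃ y : EuclideanSpace ℝ (Fin 3),
        (y 0 - 1) ^ 2 + (y 1) ^ 2 ≤ 1 ∧ y 2 = 1 ∧ x = t • y} ∧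
      ∀ C > (0 : ℝ), ∃ x ∈ V, C * Metric.infDist x Y < Metric.infDist x (Y ∩ V) := by
  classical
  set Y : Set (EuclideanSpace ℝ (Fin 3)) := {x | x 0 = 0} with hY
  set V : Set (EuclideanSpace ℝ (Fin 3)) :=
    {x | 0 ≤ x 2 ∧ (x 0 - x 2)^2 + (x 1)^2 ≤ (x 2)^2} with hV
  have hcont : ∀ i : Fin 3, Continuous fun x : EuclideanSpace ℝ (Fin 3) => x i := by
    intro i
    exact (EuclideanSpace.proj i : EuclideanSpace ℝ (Fin 3) →L[ℝ] ℝ).continuous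
  refine ⟨Y, V, ?_, ?_, ?_, ?_, ?_, ?_, rfl, ?_, ?_⟩
  · exact isClosed_eq (hcont 0) continuous_const
  · intro x hx y hy a b ha hb hab
    simp only [hY, Set.mem_setOf_eq, PiLp.add_apply, PiLp.smul_apply, smul_eq_mul] at *
    rw [hx, hy]; ring
  · intro x hx t ht
    simp only [hY, Set.mem_setOf_eq, PiLp.smul_apply, smul_eq_mul] at *
    rw [hx]; ring
  · apply IsClosed.inter
    · exact isClosed_le continuous_const (hcont 2)
    · exact isClosed_le
        (Continuous.add (((hcont 0).sub (hcont 2)).pow 2) ((hcont 1).pow 2))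
        ((hcont 2).pow 2)
  · intro x hx y hy a b ha hb hab
    obtain ⟨hx2, hxq⟩ := hx
    obtain ⟨hy2, hyq⟩ := hy
    constructor
    · simp only [PiLp.add_apply, PiLp.smul_apply, smul_eq_mul]
      positivity
    · simp only [PiLp.add_apply, PiLp.smul_apply, smul_eq_mul]
      have := soc_key (x 0 - x 2) (x 1) (x 2) (y 0 - y 2) (y 1) (y 2) a b hxq hyq hx2 hy2 ha hb
      nlinarith [this]
  · intro x hx t ht
    obtain ⟨hx2, hxq⟩ := hx
    constructor
    · simp only [PiLp.smul_apply, smul_eq_mul]; positivity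
    · simp only [PiLp.smul_apply, smul_eq_mul]
      nlinarith [hxq, sq_nonneg t]
  · ext x
    simp only [hV, Set.mem_setOf_eq]
    constructor
    · rintro ⟨hx2, hxq⟩
      rcases eq_or_lt_of_le hx2 with h0 | hpos
      · -- x 2 = 0, so x = 0
        have h0' : x 2 = 0 := h0.symm
        have hx0 : x 0 = 0 := by nlinarith [sq_nonneg (x 0), sq_nonneg (x 1)]
        have hx1 : x 1 = 0 := by nlinarith [sq_nonneg (x 0), sq_nonneg (x 1)]
        refine ⟨0, le_refl 0, (WithLp.toLp 2 (fun i => ![(1:ℝ),0,1] i) : EuclideanSpace ℝ (Fin 3)), by norm_num, by rfl, ?_⟩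
        have : x = 0 := by
          ext i
          fin_cases i <;> simpa using (by assumption : _)
        rw [this, zero_smul]
      · refine ⟨x 2, le_of_lt hpos, (x 2)⁻¹ • x, ?_, ?_, ?_⟩
        · simp only [PiLp.smul_apply, smul_eq_mul]
          have h2 : (x 2) ≠ 0 := ne_of_gt hpos
          have heq : ((x 2)⁻¹ * x 0 - 1)^2 + ((x 2)⁻¹ * x 1)^2
              = ((x 0 - x 2)^2 + (x 1)^2) / (x 2)^2 := by
            field_simp
          rw [heq, div_le_one (by positivity)]
          exact hxq
        · simp only [PiLp.smul_apply, smul_eq_mul]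
          field_simp
        · rw [smul_smul, mul_inv_cancel₀ (ne_of_gt hpos), one_smul]
    · rintro ⟨t, ht, y, hyq, hy2, rfl⟩
      simp only [PiLp.smul_apply, smul_eq_mul, hy2, mul_one]
      refine ⟨ht, ?_⟩
      nlinarith [sq_nonneg t, hyq, mul_nonneg ht ht]
  · intro C hC
    obtain ⟨ε, hε⟩ : ∃ ε : ℝ, ε = 1 / (C^2 + 1) := ⟨_, rfl⟩
    have hεpos : 0 < ε := by rw [hε]; positivity
    have hεle1 : ε ≤ 1 := by
      rw [hε, div_le_one (by positivity)]; nlinarith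
    have hq : 0 ≤ 2*ε - ε^2 := by nlinarith
    obtain ⟨b, hb⟩ : ∃ b : ℝ, b = Real.sqrt (2*ε - ε^2) := ⟨_, rfl⟩
    have hb2 : b^2 = 2*ε - ε^2 := by rw [hb]; exact Real.sq_sqrt hq
    set x : EuclideanSpace ℝ (Fin 3) := WithLp.toLp 2 (fun i => ![ε, b, 1] i) with hx
    have hx0 : x 0 = ε := rfl
    have hx1 : x 1 = b := rfl
    have hx2 : x 2 = 1 := rfl
    have hxV : x ∈ V := by
      refine ⟨by rw [hx2]; norm_num, ?_⟩
      rw [hx0, hx1, hx2, hb2]; ring_nf; nlinarith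
    refine ⟨x, hxV, ?_⟩
    -- upper bound on infDist x Y
    set z : EuclideanSpace ℝ (Fin 3) := WithLp.toLp 2 (fun i => ![0, b, 1] i) with hz
    have hzY : z ∈ Y := rfl
    have hdxz : dist x z = ε := by
      rw [EuclideanSpace.dist_eq]
      have : ∑ i : Fin 3, dist (x i) (z i)^2 = ε^2 := by
        rw [Fin.sum_univ_three]
        simp only [Real.dist_eq, sq_abs]
        show (ε - 0)^2 + (b - b)^2 + ((1:ℝ) - 1)^2 = ε^2
        ring
      rw [this, Real.sqrt_sq hεpos.le]
    have hub : Metric.infDist x Y ≤ ε := by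
      calc Metric.infDist x Y ≤ dist x z := Metric.infDist_le_dist_of_mem hzY
        _ = ε := hdxz
    -- lower bound on infDist x (Y ∩ V)
    have hne : (Y ∩ V).Nonempty := by
      refine ⟨0, ?_, ?_⟩
      · show (0 : EuclideanSpace ℝ (Fin 3)) 0 = 0; rfl
      · constructor <;> simp
    have hall : ∀ w ∈ Y ∩ V, Real.sqrt (2*ε) ≤ dist x w := by
      rintro w ⟨hwY, hwV⟩
      have hw0 : w 0 = 0 := hwY
      have hw1 : w 1 = 0 := by
        obtain ⟨hw2, hwq⟩ := hwV
        nlinarith [sq_nonneg (w 1)]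
      rw [EuclideanSpace.dist_eq]
      apply Real.sqrt_le_sqrt
      rw [Fin.sum_univ_three]
      simp only [Real.dist_eq, sq_abs]
      rw [hw0, hw1, hx0, hx1]
      nlinarith [sq_nonneg (x 2 - w 2), hb2]
    have hlb : Real.sqrt (2*ε) ≤ Metric.infDist x (Y ∩ V) := by
      by_contra h
      push_neg at h
      obtain ⟨w, hw, hdw⟩ := (Metric.infDist_lt_iff hne).1 h
      exact absurd hdw (not_lt.2 (hall w hw))
    have hkey : C * ε < Real.sqrt (2*ε) := by
      rw [show C * ε = Real.sqrt ((C*ε)^2) from (Real.sqrt_sq (by positivity)).symm]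
      apply Real.sqrt_lt_sqrt (by positivity)
      have h1 : (0:ℝ) < C^2 + 1 := by positivity
      have hC2 : C^2 * ε < 1 := by
        rw [hε, mul_one_div, div_lt_one h1]
        linarith
      nlinarith [mul_lt_mul_of_pos_right hC2 hεpos, hεpos]
    calc C * Metric.infDist x Y ≤ C * ε := by
          apply mul_le_mul_of_nonneg_left hub hC.le
      _ < Real.sqrt (2*ε) := hkey
      _ ≤ Metric.infDist x (Y ∩ V) := hlb
end

section
/- Let X, Y, V ⊆ ℝ^d be nonempty finite unions of polyhedral sets. If there exist C > 0 and θ ≥ 0 such that dist(x, X) ≤ C · dist(x, Y) + θ for all x ∈ V, then 0⁺(Y ∩ V) ⊆ 0⁺X. -/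
open scoped RealInnerProductSpace

theorem stmt_15 {d : ℕ} (X Y V : Set (EuclideanSpace ℝ (Fin d)))
    (hX : IsFinUnionPolyhedral X) (hY : IsFinUnionPolyhedral Y)
    (hV : IsFinUnionPolyhedral V)
    (hXne : X.Nonempty) (hYV : (Y ∩ V).Nonempty)
    (hbound : ∃ C > (0 : ℝ), ∃ θ : ℝ, 0 ≤ θ ∧
      ∀ x ∈ V, Metric.infDist x X ≤ C * Metric.infDist x Y + θ) :
    recCone (Y ∩ V) ⊆ recCone X := by
  obtain ⟨C, hC, θ, hθ, hb⟩ := hbound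
  rintro z ⟨x₀, hx₀, hray⟩
  obtain ⟨s, Q, hQpoly, hXeq⟩ := hX
  have key : ∀ n : ℕ, ∃ q ∈ X, dist (x₀ + (n : ℝ) • z) q < θ + 1 := by
    intro n
    have hmem := hray n (by positivity)
    have h1 : Metric.infDist (x₀ + (n : ℝ) • z) Y = 0 :=
      Metric.infDist_zero_of_mem hmem.1
    have h2 := hb _ hmem.2
    rw [h1, mul_zero, zero_add] at h2
    exact (Metric.infDist_lt_iff hXne).mp (lt_of_le_of_lt h2 (by linarith))
  choose q hqX hqd using key
  have hmemU : ∀ n : ℕ, ∃ i, q n ∈ Q i := by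
    intro n
    exact Set.mem_iUnion.mp (hXeq ▸ hqX n)
  choose ι hι using hmemU
  obtain ⟨i, hfib⟩ := Finite.exists_infinite_fiber ι
  have hS : (ι ⁻¹' {i}).Infinite := Set.infinite_coe_iff.mp hfib
  obtain ⟨m, v, b', hQeq⟩ := hQpoly i
  have hqQ : ∀ n ∈ ι ⁻¹' {i}, ∀ j, ⟪v j, q n⟫ ≤ b' j := by
    intro n hn j
    have hqn : q n ∈ Q i := by
      rw [Set.mem_preimage, Set.mem_singleton_iff] at hn
      rw [← hn]; exact hι n
    rw [hQeq] at hqn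
    rename' hqn => this
    exact this j
  have hbnd : ∀ n ∈ ι ⁻¹' {i}, ∀ j,
      ⟪v j, x₀⟫ + (n : ℝ) * ⟪v j, z⟫ ≤ b' j + ‖v j‖ * (θ + 1) := by
    intro n hn j
    have h1 : ⟪v j, x₀ + (n : ℝ) • z - q n⟫ ≤ ‖v j‖ * (θ + 1) := by
      calc ⟪v j, x₀ + (n : ℝ) • z - q n⟫ ≤ ‖v j‖ * ‖x₀ + (n : ℝ) • z - q n‖ :=
            real_inner_le_norm _ _
        _ ≤ ‖v j‖ * (θ + 1) := by
            have := (hqd n).le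
            rw [dist_eq_norm] at this
            exact mul_le_mul_of_nonneg_left this (norm_nonneg _)
    have h2 := hqQ n hn j
    have h3 : ⟪v j, x₀ + (n : ℝ) • z - q n⟫
        = ⟪v j, x₀⟫ + (n : ℝ) * ⟪v j, z⟫ - ⟪v j, q n⟫ := by
      rw [inner_sub_right, inner_add_right, real_inner_smul_right]
    linarith [h1, h2, h3.symm.le, h3.le]
  have hz : ∀ j, ⟪v j, z⟫ ≤ 0 := by
    intro j
    by_contra hc
    push_neg at hc
    set c := ⟪v j, z⟫ with hcdef
    set K := b' j + ‖v j‖ * (θ + 1) - ⟪v j, x₀⟫ with hK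
    obtain ⟨n, hn, hgt⟩ := hS.exists_gt ⌈K / c⌉₊
    have hn1 : K / c < (n : ℝ) := lt_of_le_of_lt (Nat.le_ceil _) (by exact_mod_cast hgt)
    have hn2 : K < (n : ℝ) * c := by
      have := (div_lt_iff₀ hc).mp hn1
      linarith
    have := hbnd n hn j
    linarith
  obtain ⟨n₀, hn₀⟩ := hS.nonempty
  refine ⟨q n₀, hqX n₀, ?_⟩
  intro t ht
  rw [hXeq]
  refine Set.mem_iUnion.mpr ⟨i, ?_⟩
  rw [hQeq]
  intro j
  have h1 := hqQ n₀ hn₀ j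
  have h2 : t * ⟪v j, z⟫ ≤ 0 := mul_nonpos_of_nonneg_of_nonpos ht (hz j)
  have h3 : ⟪v j, q n₀ + t • z⟫ = ⟪v j, q n₀⟫ + t * ⟪v j, z⟫ := by
    rw [inner_add_right, real_inner_smul_right]
  linarith
end

section
/- Let V ⊆ ℝ^d be a closed convex cone, and let vectors v_j ∈ ℝ^d for j in a finite nonempty set J be given. Then the following are equivalent: (1) the function x ↦ max_{j ∈ J}(a_j + ⟨v_j, x⟩) is coercive on V (i.e. tends to +∞ along any sequence in V with ‖x_n‖ → ∞), for any choice of constants a_j; (2) 0 belongs to the interior of conv{v_j | j ∈ J} + V*, where V* = {y | ⟨y, x⟩ ≤ 0 for all x ∈ V} is the polar cone of V. -/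
open scoped RealInnerProductSpace Pointwise

theorem stmt_17 {d : ℕ} (V : Set (EuclideanSpace ℝ (Fin d)))
    (hVcl : IsClosed V) (hVconv : Convex ℝ V)
    (hVcone : ∀ x ∈ V, ∀ t : ℝ, 0 ≤ t → t • x ∈ V)
    {κ : Type*} [Fintype κ] [Nonempty κ] (v : κ → EuclideanSpace ℝ (Fin d)) :
    (∀ a : κ → ℝ, ∀ u : ℕ → EuclideanSpace ℝ (Fin d), (∀ n, u n ∈ V) →
        Filter.Tendsto (fun n => ‖u n‖) Filter.atTop Filter.atTop →
        Filter.Tendsto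
          (fun n => Finset.univ.sup' Finset.univ_nonempty (fun j => a j + ⟪v j, u n⟫))
          Filter.atTop Filter.atTop) ↔
      (0 : EuclideanSpace ℝ (Fin d)) ∈
        interior (convexHull ℝ (Set.range v) + {y | ∀ x ∈ V, ⟪y, x⟫ ≤ 0}) := by
  set P : Set (EuclideanSpace ℝ (Fin d)) := {y | ∀ x ∈ V, ⟪y, x⟫ ≤ 0} with hP
  set K : Set (EuclideanSpace ℝ (Fin d)) := convexHull ℝ (Set.range v) with hK
  set C : Set (EuclideanSpace ℝ (Fin d)) := K + P with hC
  have hPz : (0 : (EuclideanSpace ℝ (Fin d))) ∈ P := by intro x hx; simp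
  have j0 : κ := Classical.arbitrary κ
  have hvK : ∀ j, v j ∈ K := fun j => subset_convexHull ℝ _ ⟨j, rfl⟩
  have hvC : ∀ j, v j ∈ C := fun j => ⟨v j, hvK j, 0, hPz, add_zero _⟩
  have hPcone : ∀ p ∈ P, ∀ t : ℝ, 0 ≤ t → t • p ∈ P := by
    intro p hp t ht x hx
    rw [real_inner_smul_left]
    exact mul_nonpos_of_nonneg_of_nonpos ht (hp x hx)
  constructor
  · -- coercive → 0 ∈ interior C
    intro h
    by_contra h0
    -- V is nonempty (else C = univ)
    rcases Set.eq_empty_or_nonempty V with hVe | hVne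
    · apply h0
      have : C = Set.univ := by
        apply Set.eq_univ_of_forall
        intro z
        exact ⟨v j0, hvK j0, z - v j0, by intro x hx; simp [hVe] at hx, add_sub_cancel _ _⟩
      rw [this]
      simp
    have h0V : (0 : (EuclideanSpace ℝ (Fin d))) ∈ V := by
      obtain ⟨x0, hx0⟩ := hVne
      simpa using hVcone x0 hx0 0 le_rfl
    -- C is closed convex
    have hKcomp : IsCompact K := (Set.finite_range v).isCompact_convexHull ℝ
    have hPclosed : IsClosed P := by
      have : P = ⋂ x ∈ V, {y : EuclideanSpace ℝ (Fin d) | ⟪y, x⟫ ≤ 0} := by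
        ext y; simp [hP, Set.mem_iInter]
      rw [this]
      exact isClosed_biInter fun x _ =>
        isClosed_le (Continuous.inner continuous_id continuous_const) continuous_const
    have hCclosed : IsClosed C := hPclosed.add_left_of_isCompact hKcomp
    have hPconv : Convex ℝ P := by
      intro y1 h1 y2 h2 a b ha hb hab x hx
      have := h1 x hx
      have := h2 x hx
      rw [inner_add_left, real_inner_smul_left, real_inner_smul_left]
      nlinarith
    have hCconv : Convex ℝ C := (convex_convexHull ℝ _).add hPconv
    -- points near 0 not in C
    have hnear : ∀ n : ℕ, ∃ x : EuclideanSpace ℝ (Fin d), ‖x‖ < 1 / (n + 1) ∧ x ∉ C := by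
      intro n
      by_contra hc
      push_neg at hc
      exact h0 (mem_interior.2 ⟨Metric.ball 0 (1 / (n + 1)),
        fun z hz => hc z (by simpa using hz), Metric.isOpen_ball,
        Metric.mem_ball_self (by positivity)⟩)
    choose x hx1 hx2 using hnear
    -- separate to get unit vectors
    have hsep : ∀ n : ℕ, ∃ w : EuclideanSpace ℝ (Fin d), ‖w‖ = 1 ∧ ∀ c ∈ C, ⟪w, c⟫ ≤ 1 / (n + 1) := by
      intro n
      obtain ⟨f, t, hft, hfx⟩ := geometric_hahn_banach_closed_point hCconv hCclosed (hx2 n)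
      set y : EuclideanSpace ℝ (Fin d) := (InnerProductSpace.toDual ℝ (EuclideanSpace ℝ (Fin d))).symm f with hy
      have hyval : ∀ z : EuclideanSpace ℝ (Fin d), ⟪y, z⟫ = f z := fun z => InnerProductSpace.toDual_symm_apply
      have hyne : y ≠ 0 := by
        intro hy0
        have h1 := hft (v j0) (hvC j0)
        have h2 : f (v j0) = ⟪y, v j0⟫ := (hyval _).symm
        have h3 : f (x n) = ⟪y, x n⟫ := (hyval _).symm
        rw [h2, hy0] at h1
        rw [hy0] at h3
        simp at h1 h3
        linarith
      refine ⟨‖y‖⁻¹ • y, ?_, ?_⟩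
      · rw [norm_smul]
        simp [norm_ne_zero_iff.2 hyne]
      · intro c hc
        have h1 : ⟪y, c⟫ < ⟪y, x n⟫ := by rw [hyval, hyval]; exact (hft c hc).trans hfx
        have h2 : ⟪y, x n⟫ ≤ ‖y‖ * ‖x n‖ := real_inner_le_norm y (x n)
        have h3 : ‖y‖ * ‖x n‖ ≤ ‖y‖ * (1 / (n + 1)) :=
          mul_le_mul_of_nonneg_left (hx1 n).le (norm_nonneg y)
        have hypos : (0 : ℝ) < ‖y‖ := norm_pos_iff.2 hyne
        rw [real_inner_smul_left]
        rw [inv_mul_le_iff₀ hypos]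
        have : ‖y‖ * (1 / (n + 1)) = 1 / (n + 1) * ‖y‖ := mul_comm _ _
        linarith
    choose w hw1 hw2 using hsep
    -- compactness: limit point
    obtain ⟨W, hWmem, φ, hφ, hWlim⟩ := (isCompact_sphere (0 : (EuclideanSpace ℝ (Fin d))) 1).tendsto_subseq
      (fun n => by simpa [mem_sphere_zero_iff_norm] using hw1 n)
    have hWnorm : ‖W‖ = 1 := mem_sphere_zero_iff_norm.1 hWmem
    have hWC : ∀ c ∈ C, ⟪W, c⟫ ≤ 0 := by
      intro c hc
      have t1 : Filter.Tendsto (fun n => ⟪w (φ n), c⟫) Filter.atTop (nhds ⟪W, c⟫) :=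
        Filter.Tendsto.inner hWlim tendsto_const_nhds
      have t2 : Filter.Tendsto (fun n : ℕ => 1 / ((φ n : ℝ) + 1)) Filter.atTop (nhds 0) :=
        tendsto_one_div_add_atTop_nhds_zero_nat.comp hφ.tendsto_atTop
      exact le_of_tendsto_of_tendsto' t1 t2 fun n => hw2 (φ n) c hc
    -- consequences
    have hWv : ∀ j, ⟪W, v j⟫ ≤ 0 := fun j => hWC (v j) (hvC j)
    have hWP : ∀ p ∈ P, ⟪W, p⟫ ≤ 0 := by
      intro p hp
      by_contra hpos
      push_neg at hpos
      set t : ℝ := (1 + |⟪W, v j0⟫|) / ⟪W, p⟫ with ht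
      have htpos : 0 ≤ t := by positivity
      have hmem : v j0 + t • p ∈ C := ⟨v j0, hvK j0, t • p, hPcone p hp t htpos, rfl⟩
      have := hWC _ hmem
      rw [inner_add_right, real_inner_smul_right] at this
      have htp : t * ⟪W, p⟫ = 1 + |⟪W, v j0⟫| := by
        rw [ht, div_mul_cancel₀ _ (ne_of_gt hpos)]
      have habs : -|⟪W, v j0⟫| ≤ ⟪W, v j0⟫ := neg_abs_le _
      linarith
    -- W ∈ V by separation
    have hWV : W ∈ V := by
      by_contra hWV
      obtain ⟨g, s, hgs, hsw⟩ := geometric_hahn_banach_closed_point hVconv hVcl hWV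
      set q : EuclideanSpace ℝ (Fin d) := (InnerProductSpace.toDual ℝ (EuclideanSpace ℝ (Fin d))).symm g with hq
      have hqval : ∀ z : EuclideanSpace ℝ (Fin d), ⟪q, z⟫ = g z := fun z => InnerProductSpace.toDual_symm_apply
      have hs0 : (0 : ℝ) < s := by
        have := hgs 0 h0V
        simpa using this
      have hqP : q ∈ P := by
        intro z hz
        by_contra hzpos
        push_neg at hzpos
        have htz : (0:ℝ) ≤ (s + 1) / ⟪q, z⟫ := by positivity
        have hval : g (((s + 1) / ⟪q, z⟫) • z) = s + 1 := by
          rw [← hqval, real_inner_smul_right, div_mul_cancel₀ _ (ne_of_gt hzpos)]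
        have := hgs _ (hVcone z hz _ htz)
        rw [hval] at this
        linarith
      have h1 : ⟪W, q⟫ ≤ 0 := hWP q hqP
      have h2 : ⟪q, W⟫ = g W := hqval W
      rw [real_inner_comm] at h1
      linarith
    -- contradiction with coercivity along n • W
    have hu : ∀ n : ℕ, (n : ℝ) • W ∈ V := fun n => hVcone W hWV n (Nat.cast_nonneg n)
    have hnorm : Filter.Tendsto (fun n : ℕ => ‖(n : ℝ) • W‖) Filter.atTop Filter.atTop := by
      have : (fun n : ℕ => ‖(n : ℝ) • W‖) = fun n : ℕ => (n : ℝ) := by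
        funext n
        rw [norm_smul, hWnorm]
        simp
      rw [this]
      exact tendsto_natCast_atTop_atTop
    have := h 0 (fun n => (n : ℝ) • W) hu hnorm
    obtain ⟨n, hn⟩ := (this.eventually (Filter.eventually_gt_atTop 0)).exists
    have hle : Finset.univ.sup' Finset.univ_nonempty
        (fun j => (0:ℝ) + ⟪v j, (n : ℝ) • W⟫) ≤ 0 := by
      apply Finset.sup'_le
      intro j _
      rw [zero_add, real_inner_smul_right, real_inner_comm]
      exact mul_nonpos_of_nonneg_of_nonpos (Nat.cast_nonneg n) (hWv j)
    simp only [Pi.zero_apply] at hn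
    linarith
  · -- 0 ∈ interior C → coercive
    intro h a u hu hnorm
    obtain ⟨ε, hε, hball⟩ := Metric.mem_nhds_iff.1 (mem_interior_iff_mem_nhds.1 h)
    have key : ∀ x ∈ V, ε / 2 * ‖x‖ ≤
        Finset.univ.sup' Finset.univ_nonempty (fun j => ⟪v j, x⟫) := by
      intro x hx
      rcases eq_or_ne x 0 with rfl | hx0
      · have : ⟪v j0, (0 : (EuclideanSpace ℝ (Fin d)))⟫ = 0 := inner_zero_right _
        calc ε / 2 * ‖(0:EuclideanSpace ℝ (Fin d))‖ = 0 := by simp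
          _ ≤ _ := by
            rw [← this]
            exact Finset.le_sup' (fun j => ⟪v j, (0 : EuclideanSpace ℝ (Fin d))⟫)
              (Finset.mem_univ j0)
      · set y : EuclideanSpace ℝ (Fin d) := (ε / (2 * ‖x‖)) • x with hy
        have hxpos : (0:ℝ) < ‖x‖ := norm_pos_iff.2 hx0
        have hyball : y ∈ Metric.ball (0 : (EuclideanSpace ℝ (Fin d))) ε := by
          rw [Metric.mem_ball, dist_zero_right, hy, norm_smul]
          rw [Real.norm_eq_abs, abs_of_pos (by positivity)]
          rw [div_mul_eq_mul_div, mul_comm]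
          rw [div_lt_iff₀ (by positivity)]
          calc ‖x‖ * ε < ‖x‖ * ε * 2 := by nlinarith
            _ = ε * (2 * ‖x‖) := by ring
        obtain ⟨k, hk, p, hp, hkp0⟩ := hball hyball
        have hkp : k + p = y := hkp0
        have hinnery : ⟪y, x⟫ = ε / 2 * ‖x‖ := by
          rw [hy, real_inner_smul_left, real_inner_self_eq_norm_sq]
          field_simp
        have hpx : ⟪p, x⟫ ≤ 0 := hp x hx
        have hkx : ε / 2 * ‖x‖ ≤ ⟪k, x⟫ := by
          have : ⟪k, x⟫ + ⟪p, x⟫ = ε / 2 * ‖x‖ := by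
            rw [← inner_add_left, hkp, hinnery]
          linarith
        have hhull : k ∈ {z : EuclideanSpace ℝ (Fin d) | ⟪z, x⟫ ≤
            Finset.univ.sup' Finset.univ_nonempty (fun j => ⟪v j, x⟫)} := by
          apply convexHull_min ?_ ?_ hk
          · rintro z ⟨j, rfl⟩
            exact Finset.le_sup' (fun j => ⟪v j, x⟫) (Finset.mem_univ j)
          · exact convex_halfSpace_le ⟨fun a b => inner_add_left a b x,
              fun c a => real_inner_smul_left a x c⟩ _
        exact hkx.trans hhull
    set amin : ℝ := Finset.univ.inf' Finset.univ_nonempty a with hamin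
    have hbig : ∀ n, amin + ε / 2 * ‖u n‖ ≤
        Finset.univ.sup' Finset.univ_nonempty (fun j => a j + ⟪v j, u n⟫) := by
      intro n
      obtain ⟨j1, _, hj1⟩ := Finset.exists_mem_eq_sup' Finset.univ_nonempty
        (fun j => ⟪v j, u n⟫)
      have h1 : ε / 2 * ‖u n‖ ≤ ⟪v j1, u n⟫ := by
        rw [← hj1]; exact key _ (hu n)
      have h2 : amin ≤ a j1 := Finset.inf'_le _ (Finset.mem_univ j1)
      calc amin + ε / 2 * ‖u n‖ ≤ a j1 + ⟪v j1, u n⟫ := by linarith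
        _ ≤ _ := Finset.le_sup' (fun j => a j + ⟪v j, u n⟫) (Finset.mem_univ j1)
    apply Filter.tendsto_atTop_mono hbig
    apply Filter.tendsto_atTop_add_const_left
    exact hnorm.const_mul_atTop (by positivity)
end
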